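/- arXiv:2105.00834 — 6 statements merged into one kernel-verified Lean document; each statement's English description precedes it below -/
import Mathlib

section
/- For all j ∈ ℤ with j ≤ −1 one has V^in_{j−1} − V^in_j ≤ γ₀ ‖v'‖ (ρ_max − ρ_j), and for all j ≥ 0 one has V^in_{j−1} − V^in_j ≤ 0. -/
open MeasureTheory

lemma sum_Icc_int (F : ℤ → ℝ) (c : ℤ) :
    ∑ k ∈ Finset.Icc (0:ℤ) c, F k = ∑ i ∈ Finset.range (c+1).toNat, F (i:ℤ) := by
  refine Finset.sum_nbij' (fun k => k.toNat) (fun i => (i:ℤ)) ?_ ?_ ?_ ?_ ?_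
  · intro a ha; simp only [Finset.mem_Icc] at ha; simp only [Finset.mem_range]; omega
  · intro a ha; simp only [Finset.mem_range] at ha; simp only [Finset.mem_Icc]; omega
  · intro a ha; simp only [Finset.mem_Icc] at ha; omega
  · intro a ha; simp
  · intro a ha; simp only [Finset.mem_Icc] at ha
    congr 1; omega

/-- For all `j ≤ -1`, `V^in_{j-1} - V^in_j ≤ γ₀ ‖v'‖ (ρ_max - ρ_j)`,
and for all `j ≥ 0`, `V^in_{j-1} - V^in_j ≤ 0`. -/
theorem stmt_0
    (ρmax : ℝ) (hρmax : 0 < ρmax)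
    (v : ℝ → ℝ)
    (hv : ContDiffOn ℝ 2 v (Set.Icc 0 ρmax))
    (hvmono : AntitoneOn v (Set.Icc 0 ρmax))
    (hvnn : ∀ x ∈ Set.Icc (0 : ℝ) ρmax, 0 ≤ v x)
    (hvmax : v ρmax = 0)
    (nvd : ℝ)
    (hnvd : nvd = sSup ((fun x => |deriv v x|) '' Set.Icc 0 ρmax))
    (η Δx : ℝ) (hη : 0 < η) (hΔx : 0 < Δx)
    (Nη : ℕ) (hNη : 0 < Nη) (hηN : η = (Nη : ℝ) * Δx)
    (ω : ℝ → ℝ)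
    (hω : ContDiffOn ℝ 1 ω (Set.Icc 0 η))
    (hωmono : AntitoneOn ω (Set.Icc 0 η))
    (hωnn : ∀ x ∈ Set.Icc (0 : ℝ) η, 0 ≤ ω x)
    (hωint : (∫ x in (0 : ℝ)..η, ω x) = 1)
    (γ : ℤ → ℝ)
    (hγ : ∀ k : ℤ, 0 ≤ k → k ≤ (Nη : ℤ) - 1 →
      γ k = ∫ x in ((k : ℝ) * Δx)..(((k : ℝ) + 1) * Δx), ω x)
    (ρ : ℤ → ℝ) (hρ : ∀ j : ℤ, ρ j ∈ Set.Icc 0 ρmax)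
    (Vin : ℤ → ℝ)
    (hVin : ∀ j : ℤ,
      Vin j = ∑ k ∈ Finset.Icc (0 : ℤ) (min (-j - 2) ((Nη : ℤ) - 1)),
        γ k * v (ρ (j + k + 1))) :
    (∀ j : ℤ, j ≤ -1 → Vin (j - 1) - Vin j ≤ γ 0 * nvd * (ρmax - ρ j)) ∧
    (∀ j : ℤ, 0 ≤ j → Vin (j - 1) - Vin j ≤ 0) := by
  -- ω integrability helpers
  have hωcont : ContinuousOn ω (Set.Icc 0 η) := hω.continuousOn
  have hsub : ∀ k : ℤ, 0 ≤ k → k + 1 ≤ (Nη : ℤ) →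
      Set.Icc ((k:ℝ) * Δx) (((k:ℝ)+1) * Δx) ⊆ Set.Icc (0:ℝ) η := by
    intro k hk hk2 x hx
    constructor
    · have : (0:ℝ) ≤ (k:ℝ) * Δx := mul_nonneg (by exact_mod_cast hk) hΔx.le
      linarith [hx.1]
    · have h1 : ((k:ℝ)+1) * Δx ≤ (Nη:ℝ) * Δx := by
        apply mul_le_mul_of_nonneg_right _ hΔx.le
        have : ((k:ℤ)+1 : ℝ) ≤ ((Nη:ℤ) : ℝ) := by exact_mod_cast hk2
        push_cast at this ⊢; linarith
      rw [hηN]; linarith [hx.2]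
  -- γ nonneg
  have hγ0 : ∀ k : ℤ, 0 ≤ k → k ≤ (Nη : ℤ) - 1 → 0 ≤ γ k := by
    intro k hk hk2
    rw [hγ k hk hk2]
    have hknn : (0:ℝ) ≤ (k:ℝ) := by exact_mod_cast hk
    have hab : (k:ℝ) * Δx ≤ ((k:ℝ)+1) * Δx := by nlinarith
    apply intervalIntegral.integral_nonneg hab
    intro u hu
    exact hωnn u (hsub k hk (by omega) hu)
  -- γ antitone step
  have hγstep : ∀ k : ℤ, 0 ≤ k → k + 1 ≤ (Nη : ℤ) - 1 → γ (k+1) ≤ γ k := by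
    intro k hk hk2
    rw [hγ (k+1) (by omega) (by omega), hγ k hk (by omega)]
    have hcast : (((k+1:ℤ)):ℝ) = (k:ℝ) + 1 := by push_cast; ring
    rw [hcast]
    have key : (∫ x in (((k:ℝ)+1) * Δx)..((((k:ℝ)+1)+1) * Δx), ω x)
        = ∫ x in ((k:ℝ) * Δx)..(((k:ℝ)+1) * Δx), ω (x + Δx) := by
      rw [intervalIntegral.integral_comp_add_right]
      congr 1 <;> ring
    rw [key]
    have hknn : (0:ℝ) ≤ (k:ℝ) := by exact_mod_cast hk
    have hab : (k:ℝ) * Δx ≤ ((k:ℝ)+1) * Δx := by nlinarith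
    have hsub1 : Set.Icc ((k:ℝ) * Δx) (((k:ℝ)+1) * Δx) ⊆ Set.Icc (0:ℝ) η :=
      hsub k hk (by omega)
    have hsub2 : Set.Icc (((k:ℝ)+1) * Δx) ((((k:ℝ)+1)+1) * Δx) ⊆ Set.Icc (0:ℝ) η := by
      have := hsub (k+1) (by omega) (by omega)
      rw [hcast] at this
      convert this using 3 <;> ring
    apply intervalIntegral.integral_mono_on hab
    · apply ContinuousOn.intervalIntegrable
      apply ContinuousOn.comp hωcont (Continuous.continuousOn (by continuity))
      intro x hx
      rw [Set.uIcc_of_le hab, Set.mem_Icc] at hx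
      apply hsub2
      simp only [Set.mem_Icc]
      constructor <;> linarith [hx.1, hx.2]
    · apply ContinuousOn.intervalIntegrable
      apply hωcont.mono
      rw [Set.uIcc_of_le hab]
      exact hsub1
    · intro x hx
      rw [Set.mem_Icc] at hx
      apply hωmono (hsub1 (Set.mem_Icc.mpr hx))
      · apply hsub2
        simp only [Set.mem_Icc]
        constructor <;> linarith [hx.1, hx.2]
      · linarith
  -- Lipschitz-type bound for v
  have hLip : ∀ j : ℤ, v (ρ j) ≤ nvd * (ρmax - ρ j) := by
    have hvcont : ContinuousOn v (Set.Icc 0 ρmax) := hv.continuousOn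
    have hUD : UniqueDiffOn ℝ (Set.Icc (0:ℝ) ρmax) := uniqueDiffOn_Icc hρmax
    have hgc : ContinuousOn (derivWithin v (Set.Icc 0 ρmax)) (Set.Icc 0 ρmax) :=
      hv.continuousOn_derivWithin hUD (by norm_num)
    obtain ⟨C, hC⟩ := isCompact_Icc.exists_bound_of_continuousOn hgc
    have hbdd : BddAbove ((fun x => |deriv v x|) '' Set.Icc 0 ρmax) := by
      refine ⟨max C (max |deriv v 0| |deriv v ρmax|), ?_⟩
      rintro y ⟨x, hx, rfl⟩
      rcases eq_or_lt_of_le hx.1 with h0 | h0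
      · rw [← h0]; exact le_max_of_le_right (le_max_left _ _)
      rcases eq_or_lt_of_le hx.2 with h1 | h1
      · rw [h1]; exact le_max_of_le_right (le_max_right _ _)
      · have hmem : Set.Icc (0:ℝ) ρmax ∈ nhds x := Icc_mem_nhds h0 h1
        have hd : deriv v x = derivWithin v (Set.Icc 0 ρmax) x :=
          (derivWithin_of_mem_nhds hmem).symm
        dsimp only
        rw [hd]
        exact le_max_of_le_left (by simpa using hC x hx)
    intro j
    obtain ⟨h0j, h1j⟩ := hρ j
    rcases eq_or_lt_of_le h1j with heq | hlt
    · rw [heq, hvmax]; simp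
    · have hd : ∀ x ∈ Set.Ioo (ρ j) ρmax, HasDerivAt v (deriv v x) x := by
        intro x hx
        have hxI : Set.Icc (0:ℝ) ρmax ∈ nhds x :=
          Icc_mem_nhds (lt_of_le_of_lt h0j hx.1) hx.2
        exact ((hv.differentiableOn (by norm_num) x
          ⟨(lt_of_le_of_lt h0j hx.1).le, hx.2.le⟩).differentiableAt hxI).hasDerivAt
      obtain ⟨c, hc, hceq⟩ := exists_hasDerivAt_eq_slope v (deriv v) hlt
        (hvcont.mono (Set.Icc_subset_Icc h0j le_rfl)) hd
      have hcI : c ∈ Set.Icc 0 ρmax := ⟨le_trans h0j hc.1.le, hc.2.le⟩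
      have h1 : |deriv v c| ≤ nvd := hnvd ▸ le_csSup hbdd ⟨c, hcI, rfl⟩
      have hpos : 0 < ρmax - ρ j := by linarith
      have heqv : v (ρ j) = -deriv v c * (ρmax - ρ j) := by
        rw [hceq, hvmax]; field_simp; ring
      calc v (ρ j) = -deriv v c * (ρmax - ρ j) := heqv
        _ ≤ |deriv v c| * (ρmax - ρ j) :=
            mul_le_mul_of_nonneg_right (neg_le_abs _) hpos.le
        _ ≤ nvd * (ρmax - ρ j) := mul_le_mul_of_nonneg_right h1 hpos.le
  have hvnn' : ∀ m : ℤ, 0 ≤ v (ρ m) := fun m => hvnn _ (hρ m)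
  constructor
  · -- main inequality for j ≤ -1
    intro j hj
    have e1 : Vin (j-1) = ∑ i ∈ Finset.range ((min (-j) ((Nη:ℕ):ℤ)).toNat),
        γ (i:ℤ) * v (ρ (j + (i:ℤ))) := by
      rw [hVin (j-1), sum_Icc_int (fun k => γ k * v (ρ (j - 1 + k + 1)))]
      have hset : ((min (-(j-1) - 2) ((Nη:ℤ)-1)) + 1).toNat = (min (-j) ((Nη:ℕ):ℤ)).toNat := by
        omega
      rw [hset]
      apply Finset.sum_congr rfl
      intro i _
      have : j - 1 + (i:ℤ) + 1 = j + i := by ring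
      rw [this]
    have e2 : Vin j = ∑ i ∈ Finset.range ((min (-j-1) ((Nη:ℕ):ℤ)).toNat),
        γ (i:ℤ) * v (ρ (j + (i:ℤ) + 1)) := by
      rw [hVin j, sum_Icc_int (fun k => γ k * v (ρ (j + k + 1)))]
      have hset : ((min (-j - 2) ((Nη:ℤ)-1)) + 1).toNat = (min (-j-1) ((Nη:ℕ):ℤ)).toNat := by
        omega
      rw [hset]
    set P := (min (-j) ((Nη:ℕ):ℤ)).toNat with hP
    set Q := (min (-j-1) ((Nη:ℕ):ℤ)).toNat with hQ
    have hterm : ∀ i : ℕ, (i:ℤ) + 1 ≤ (Nη:ℤ) - 1 →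
        γ (((i+1:ℕ)):ℤ) * v (ρ (j + ((i+1:ℕ):ℤ))) - γ (i:ℤ) * v (ρ (j + (i:ℤ) + 1)) ≤ 0 := by
      intro i hi
      have hc : ((i+1:ℕ):ℤ) = (i:ℤ) + 1 := by push_cast; ring
      rw [hc]
      have hc2 : j + ((i:ℤ) + 1) = j + (i:ℤ) + 1 := by ring
      rw [hc2]
      have h1 : γ ((i:ℤ)+1) ≤ γ (i:ℤ) := hγstep i (by omega) hi
      have h2 : 0 ≤ v (ρ (j + (i:ℤ) + 1)) := hvnn' _
      have := mul_le_mul_of_nonneg_right h1 h2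
      linarith
    have key : Vin (j-1) - Vin j ≤ γ 0 * v (ρ j) := by
      rw [e1, e2]
      by_cases hcase : (-j-1 : ℤ) < (Nη:ℤ)
      · have hPQ : P = Q + 1 := by omega
        have hQN : (Q:ℤ) ≤ (Nη:ℤ) - 1 := by omega
        rw [hPQ, Finset.sum_range_succ']
        have hzero : γ ((0:ℕ):ℤ) * v (ρ (j + ((0:ℕ):ℤ))) = γ 0 * v (ρ j) := by
          norm_num
        rw [hzero]
        have hsum : ∑ i ∈ Finset.range Q, γ (((i+1:ℕ)):ℤ) * v (ρ (j + ((i+1:ℕ):ℤ)))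
            - ∑ i ∈ Finset.range Q, γ (i:ℤ) * v (ρ (j + (i:ℤ) + 1)) ≤ 0 := by
          rw [← Finset.sum_sub_distrib]
          apply Finset.sum_nonpos
          intro i hi
          simp only [Finset.mem_range] at hi
          exact hterm i (by omega)
        linarith
      · have hPN : P = Nη := by omega
        have hQN : Q = Nη := by omega
        obtain ⟨m, hm⟩ : ∃ m, Nη = m + 1 := ⟨Nη - 1, by omega⟩
        rw [hPN, hQN, hm, Finset.sum_range_succ', Finset.sum_range_succ]
        have hzero : γ ((0:ℕ):ℤ) * v (ρ (j + ((0:ℕ):ℤ))) = γ 0 * v (ρ j) := by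
          norm_num
        rw [hzero]
        have hsum : ∑ i ∈ Finset.range m, γ (((i+1:ℕ)):ℤ) * v (ρ (j + ((i+1:ℕ):ℤ)))
            - ∑ i ∈ Finset.range m, γ (i:ℤ) * v (ρ (j + (i:ℤ) + 1)) ≤ 0 := by
          rw [← Finset.sum_sub_distrib]
          apply Finset.sum_nonpos
          intro i hi
          simp only [Finset.mem_range] at hi
          exact hterm i (by omega)
        have hg : 0 ≤ γ (m:ℤ) * v (ρ (j + (m:ℤ) + 1)) :=
          mul_nonneg (hγ0 m (by omega) (by omega)) (hvnn' _)
        linarith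
    have hγ00 : 0 ≤ γ 0 := hγ0 0 le_rfl (by omega)
    calc Vin (j-1) - Vin j ≤ γ 0 * v (ρ j) := key
      _ ≤ γ 0 * (nvd * (ρmax - ρ j)) := mul_le_mul_of_nonneg_left (hLip j) hγ00
      _ = γ 0 * nvd * (ρmax - ρ j) := by ring
  · intro j hj
    have h1 : Finset.Icc (0:ℤ) (min (-(j-1) - 2) ((Nη:ℤ)-1)) = ∅ :=
      Finset.Icc_eq_empty (by omega)
    have h2 : Finset.Icc (0:ℤ) (min (-j - 2) ((Nη:ℤ)-1)) = ∅ :=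
      Finset.Icc_eq_empty (by omega)
    rw [hVin (j-1), hVin j, h1, h2]
    simp
end

section
/- For all j ∈ ℤ with j ≤ −1 one has V^out_{j−1} − V^out_j ≤ 0, and for all j ≥ 0 one has V^out_{j−1} − V^out_j ≤ γ₀ ‖v'‖ (ρ_max − ρ_j). -/
open MeasureTheory

/-- Auxiliary shifting/comparison lemma for sums over integer intervals. -/
lemma sum_shift_le (g b : ℤ → ℝ) (m n : ℤ)
    (hb : ∀ k, 0 ≤ b k)
    (hg : ∀ k, m ≤ k → k ≤ n → 0 ≤ g k)
    (hmono : ∀ k, m ≤ k → k + 1 ≤ n → g (k + 1) ≤ g k) :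
    ∑ k ∈ Finset.Icc (m + 1) n, g k * b k ≤ ∑ k ∈ Finset.Icc m n, g k * b (k + 1) := by
  have h1 : Finset.Icc (m + 1) n = Finset.map (addRightEmbedding 1) (Finset.Icc m (n - 1)) := by
    rw [Finset.map_add_right_Icc]
    congr 1
    omega
  rw [h1, Finset.sum_map]
  simp only [addRightEmbedding_apply]
  calc ∑ k ∈ Finset.Icc m (n - 1), g (k + 1) * b (k + 1)
      ≤ ∑ k ∈ Finset.Icc m (n - 1), g k * b (k + 1) := by
        apply Finset.sum_le_sum
        intro k hk
        rw [Finset.mem_Icc] at hk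
        exact mul_le_mul_of_nonneg_right (hmono k hk.1 (by omega)) (hb _)
    _ ≤ ∑ k ∈ Finset.Icc m n, g k * b (k + 1) := by
        apply Finset.sum_le_sum_of_subset_of_nonneg
        · exact Finset.Icc_subset_Icc_right (by omega)
        · intro k hk _
          rw [Finset.mem_Icc] at hk
          exact mul_nonneg (hg k hk.1 hk.2) (hb _)

/-- For all `j ≤ -1`, `V^out_{j-1} - V^out_j ≤ 0`,
and for all `j ≥ 0`, `V^out_{j-1} - V^out_j ≤ γ₀ ‖v'‖ (ρ_max - ρ_j)`. -/
theorem stmt_1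
    (ρmax : ℝ) (hρmax : 0 < ρmax)
    (v : ℝ → ℝ)
    (hv : ContDiffOn ℝ 2 v (Set.Icc 0 ρmax))
    (hvmono : AntitoneOn v (Set.Icc 0 ρmax))
    (hvnn : ∀ x ∈ Set.Icc (0 : ℝ) ρmax, 0 ≤ v x)
    (hvmax : v ρmax = 0)
    (nvd : ℝ)
    (hnvd : nvd = sSup ((fun x => |deriv v x|) '' Set.Icc 0 ρmax))
    (η Δx : ℝ) (hη : 0 < η) (hΔx : 0 < Δx)
    (Nη : ℕ) (hNη : 0 < Nη) (hηN : η = (Nη : ℝ) * Δx)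
    (ω : ℝ → ℝ)
    (hω : ContDiffOn ℝ 1 ω (Set.Icc 0 η))
    (hωmono : AntitoneOn ω (Set.Icc 0 η))
    (hωnn : ∀ x ∈ Set.Icc (0 : ℝ) η, 0 ≤ ω x)
    (hωint : (∫ x in (0 : ℝ)..η, ω x) = 1)
    (γ : ℤ → ℝ)
    (hγ : ∀ k : ℤ, 0 ≤ k → k ≤ (Nη : ℤ) - 1 →
      γ k = ∫ x in ((k : ℝ) * Δx)..(((k : ℝ) + 1) * Δx), ω x)
    (ρ : ℤ → ℝ) (hρ : ∀ j : ℤ, ρ j ∈ Set.Icc 0 ρmax)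
    (Vout : ℤ → ℝ)
    (hVout : ∀ j : ℤ,
      Vout j = ∑ k ∈ Finset.Icc (max (-j - 1) 0) ((Nη : ℤ) - 1),
        γ k * v (ρ (j + k + 1))) :
    (∀ j : ℤ, j ≤ -1 → Vout (j - 1) - Vout j ≤ 0) ∧
    (∀ j : ℤ, 0 ≤ j → Vout (j - 1) - Vout j ≤ γ 0 * nvd * (ρmax - ρ j)) := by
  have hωc : ContinuousOn ω (Set.Icc 0 η) := hω.continuousOn
  -- nonnegativity of γ on [0, Nη - 1]
  have hγnn : ∀ k : ℤ, 0 ≤ k → k ≤ (Nη : ℤ) - 1 → 0 ≤ γ k := by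
    intro k hk0 hk1
    have hk0' : (0 : ℝ) ≤ (k : ℝ) := by exact_mod_cast hk0
    have hk1' : (k : ℝ) + 1 ≤ (Nη : ℝ) := by exact_mod_cast (by omega : k + 1 ≤ (Nη : ℤ))
    rw [hγ k hk0 hk1]
    apply intervalIntegral.integral_nonneg
    · nlinarith
    · intro u hu
      apply hωnn
      constructor
      · nlinarith [hu.1, mul_nonneg hk0' hΔx.le]
      · rw [hηN]
        nlinarith [hu.2, mul_le_mul_of_nonneg_right hk1' hΔx.le]
  -- monotonicity of γ on [0, Nη - 1]
  have hγmono : ∀ k : ℤ, 0 ≤ k → k + 1 ≤ (Nη : ℤ) - 1 → γ (k + 1) ≤ γ k := by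
    intro k hk0 hk1
    have hk0' : (0 : ℝ) ≤ (k : ℝ) := by exact_mod_cast hk0
    have hk2' : (k : ℝ) + 2 ≤ (Nη : ℝ) := by exact_mod_cast (by omega : k + 2 ≤ (Nη : ℤ))
    have hab : (k : ℝ) * Δx ≤ ((k : ℝ) + 1) * Δx := by nlinarith
    have h0 : γ k = ∫ x in ((k : ℝ) * Δx)..(((k : ℝ) + 1) * Δx), ω x :=
      hγ k hk0 (by omega)
    have h1 : γ (k + 1) = ∫ x in (((k : ℝ) + 1) * Δx)..(((k : ℝ) + 2) * Δx), ω x := by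
      rw [hγ (k + 1) (by omega) hk1]
      congr 1 <;> push_cast <;> ring
    have hmem : ∀ x ∈ Set.Icc ((k : ℝ) * Δx) (((k : ℝ) + 1) * Δx), x ∈ Set.Icc 0 η := by
      intro x hx
      constructor
      · nlinarith [hx.1, mul_nonneg hk0' hΔx.le]
      · rw [hηN]
        nlinarith [hx.2, mul_le_mul_of_nonneg_right hk2' hΔx.le]
    have hmem' : ∀ x ∈ Set.Icc ((k : ℝ) * Δx) (((k : ℝ) + 1) * Δx),
        x + Δx ∈ Set.Icc 0 η := by
      intro x hx
      constructor
      · nlinarith [hx.1, mul_nonneg hk0' hΔx.le]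
      · rw [hηN]
        nlinarith [hx.2, mul_le_mul_of_nonneg_right hk2' hΔx.le]
    have hint1 : IntervalIntegrable ω volume ((k : ℝ) * Δx) (((k : ℝ) + 1) * Δx) := by
      apply ContinuousOn.intervalIntegrable
      rw [Set.uIcc_of_le hab]
      exact hωc.mono hmem
    have hint2 : IntervalIntegrable (fun x => ω (x + Δx)) volume
        ((k : ℝ) * Δx) (((k : ℝ) + 1) * Δx) := by
      apply ContinuousOn.intervalIntegrable
      rw [Set.uIcc_of_le hab]
      exact ContinuousOn.comp hωc ((continuous_id.add continuous_const).continuousOn) hmem'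
    have e : γ (k + 1) = ∫ x in ((k : ℝ) * Δx)..(((k : ℝ) + 1) * Δx), ω (x + Δx) := by
      rw [h1, intervalIntegral.integral_comp_add_right]
      congr 1 <;> ring
    rw [e, h0]
    apply intervalIntegral.integral_mono_on hab hint2 hint1
    intro x hx
    exact hωmono (hmem x hx) (hmem' x hx) (by linarith [hΔx.le])
  -- Lipschitz-type bound for v
  have hvbound : ∀ x ∈ Set.Icc (0 : ℝ) ρmax, v x ≤ nvd * (ρmax - x) := by
    intro x hx
    rcases eq_or_lt_of_le hx.2 with heq | hlt
    · rw [heq, hvmax]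
      simp
    · -- boundedness of the sSup set
      have hud := uniqueDiffOn_Icc hρmax
      have hw : ContinuousOn (derivWithin v (Set.Icc 0 ρmax)) (Set.Icc 0 ρmax) :=
        hv.continuousOn_derivWithin hud one_le_two
      have hT : BddAbove ((fun y => |derivWithin v (Set.Icc 0 ρmax) y|) '' Set.Icc 0 ρmax) :=
        (isCompact_Icc.image_of_continuousOn hw.abs).bddAbove
      have hfin : BddAbove ({|deriv v 0|, |deriv v ρmax|} : Set ℝ) :=
        (Set.toFinite _).bddAbove
      have hS : ((fun y => |deriv v y|) '' Set.Icc 0 ρmax) ⊆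
          ((fun y => |derivWithin v (Set.Icc 0 ρmax) y|) '' Set.Icc 0 ρmax) ∪
            ({|deriv v 0|, |deriv v ρmax|} : Set ℝ) := by
        rintro _ ⟨y, hy, rfl⟩
        rcases eq_or_lt_of_le hy.1 with h0 | h0
        · right; left; rw [← h0]
        · rcases eq_or_lt_of_le hy.2 with h1 | h1
          · right; right; rw [h1]; rfl
          · left
            refine ⟨y, hy, ?_⟩
            show |derivWithin v (Set.Icc 0 ρmax) y| = |deriv v y|
            rw [derivWithin_of_mem_nhds (Icc_mem_nhds h0 h1)]
      have hbdd : BddAbove ((fun y => |deriv v y|) '' Set.Icc 0 ρmax) :=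
        (hT.union hfin).mono hS
      -- mean value theorem
      have hvc : ContinuousOn v (Set.Icc x ρmax) :=
        hv.continuousOn.mono (Set.Icc_subset_Icc hx.1 le_rfl)
      have hdiff : ∀ y ∈ Set.Ioo x ρmax, HasDerivAt v (deriv v y) y := by
        intro y hy
        have hy0 : 0 < y := lt_of_le_of_lt hx.1 hy.1
        exact ((hv.differentiableOn two_ne_zero).differentiableAt
          (Icc_mem_nhds hy0 hy.2)).hasDerivAt
      obtain ⟨c, hc, hcd⟩ := exists_hasDerivAt_eq_slope v (deriv v) hlt hvc hdiff
      have hle : |deriv v c| ≤ nvd := by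
        rw [hnvd]
        exact le_csSup hbdd ⟨c, ⟨le_trans hx.1 hc.1.le, hc.2.le⟩, rfl⟩
      have key : deriv v c * (ρmax - x) = v ρmax - v x := by
        rw [hcd, div_mul_cancel₀ _ (sub_ne_zero.mpr hlt.ne')]
      have h1 : -(deriv v c) ≤ nvd := (neg_le_abs _).trans hle
      have h2 : (0 : ℝ) ≤ ρmax - x := by linarith
      nlinarith [mul_le_mul_of_nonneg_right h1 h2]
  have hb : ∀ (j : ℤ) (k : ℤ), 0 ≤ v (ρ (j + k)) := fun j k => hvnn _ (hρ _)
  constructor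
  · intro j hj
    rw [hVout (j - 1), hVout j, sub_nonpos]
    have e1 : Finset.Icc (max (-(j - 1) - 1) 0) ((Nη : ℤ) - 1)
        = Finset.Icc ((-j - 1) + 1) ((Nη : ℤ) - 1) := by
      congr 1
      omega
    have e2 : max (-j - 1) 0 = -j - 1 := by omega
    rw [e1, e2]
    have e3 : ∀ k : ℤ, γ k * v (ρ (j - 1 + k + 1)) = γ k * v (ρ (j + k)) := by
      intro k
      rw [show j - 1 + k + 1 = j + k from by ring]
    have e4 : ∀ k : ℤ, γ k * v (ρ (j + k + 1)) = γ k * v (ρ (j + (k + 1))) := by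
      intro k
      rw [show j + (k + 1) = j + k + 1 from by ring]
    simp only [e3, e4]
    exact sum_shift_le γ (fun k => v (ρ (j + k))) (-j - 1) ((Nη : ℤ) - 1) (hb j)
      (fun k h1 h2 => hγnn k (by omega) h2)
      (fun k h1 h2 => hγmono k (by omega) h2)
  · intro j hj
    rw [hVout (j - 1), hVout j]
    have e1 : max (-(j - 1) - 1) 0 = (0 : ℤ) := by omega
    have e2 : max (-j - 1) 0 = (0 : ℤ) := by omega
    rw [e1, e2]
    have e3 : ∀ k : ℤ, γ k * v (ρ (j - 1 + k + 1)) = γ k * v (ρ (j + k)) := by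
      intro k
      rw [show j - 1 + k + 1 = j + k from by ring]
    have e4 : ∀ k : ℤ, γ k * v (ρ (j + k + 1)) = γ k * v (ρ (j + (k + 1))) := by
      intro k
      rw [show j + (k + 1) = j + k + 1 from by ring]
    simp only [e3, e4]
    have hins : Finset.Icc (0 : ℤ) ((Nη : ℤ) - 1)
        = insert 0 (Finset.Icc 1 ((Nη : ℤ) - 1)) := by
      ext k
      simp only [Finset.mem_Icc, Finset.mem_insert]
      omega
    have h0notmem : (0 : ℤ) ∉ Finset.Icc (1 : ℤ) ((Nη : ℤ) - 1) := by
      simp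
    have h5 : ∑ k ∈ Finset.Icc (0 : ℤ) ((Nη : ℤ) - 1), γ k * v (ρ (j + k))
        = γ 0 * v (ρ j) + ∑ k ∈ Finset.Icc (1 : ℤ) ((Nη : ℤ) - 1), γ k * v (ρ (j + k)) := by
      rw [hins, Finset.sum_insert h0notmem, add_zero]
    have h6 : ∑ k ∈ Finset.Icc (1 : ℤ) ((Nη : ℤ) - 1), γ k * v (ρ (j + k))
        ≤ ∑ k ∈ Finset.Icc (0 : ℤ) ((Nη : ℤ) - 1), γ k * v (ρ (j + (k + 1))) := by
      have := sum_shift_le γ (fun k => v (ρ (j + k))) 0 ((Nη : ℤ) - 1) (hb j)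
        (fun k h1 h2 => hγnn k h1 h2)
        (fun k h1 h2 => hγmono k h1 h2)
      simpa using this
    have h7 : v (ρ j) ≤ nvd * (ρmax - ρ j) := hvbound (ρ j) (hρ j)
    have h8 : (0 : ℝ) ≤ γ 0 := hγnn 0 le_rfl (by omega)
    have h9 : γ 0 * v (ρ j) ≤ γ 0 * (nvd * (ρmax - ρ j)) :=
      mul_le_mul_of_nonneg_left h7 h8
    nlinarith [h5, h6, h9]
end

section
/- For all j ∈ ℤ with j ≤ −1 one has V^in_{j−1} ρ_max − V^in_j ρ_j ≤ (γ₀ ‖v'‖ ρ_max + V^in_j)(ρ_max − ρ_j), and for all j ≥ 0 one has V^in_{j−1} ρ_max − V^in_j ρ_j ≤ V^in_j (ρ_max − ρ_j). -/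
open MeasureTheory

/-- For all `j ≤ -1`,
`V^in_{j-1} ρ_max - V^in_j ρ_j ≤ (γ₀ ‖v'‖ ρ_max + V^in_j)(ρ_max - ρ_j)`,
and for all `j ≥ 0`, `V^in_{j-1} ρ_max - V^in_j ρ_j ≤ V^in_j (ρ_max - ρ_j)`. -/
theorem stmt_2
    (ρmax : ℝ) (hρmax : 0 < ρmax)
    (v : ℝ → ℝ)
    (hv : ContDiffOn ℝ 2 v (Set.Icc 0 ρmax))
    (hvmono : AntitoneOn v (Set.Icc 0 ρmax))
    (hvnn : ∀ x ∈ Set.Icc (0 : ℝ) ρmax, 0 ≤ v x)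
    (hvmax : v ρmax = 0)
    (nvd : ℝ)
    (hnvd : nvd = sSup ((fun x => |deriv v x|) '' Set.Icc 0 ρmax))
    (η Δx : ℝ) (hη : 0 < η) (hΔx : 0 < Δx)
    (Nη : ℕ) (hNη : 0 < Nη) (hηN : η = (Nη : ℝ) * Δx)
    (ω : ℝ → ℝ)
    (hω : ContDiffOn ℝ 1 ω (Set.Icc 0 η))
    (hωmono : AntitoneOn ω (Set.Icc 0 η))
    (hωnn : ∀ x ∈ Set.Icc (0 : ℝ) η, 0 ≤ ω x)
    (hωint : (∫ x in (0 : ℝ)..η, ω x) = 1)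
    (γ : ℤ → ℝ)
    (hγ : ∀ k : ℤ, 0 ≤ k → k ≤ (Nη : ℤ) - 1 →
      γ k = ∫ x in ((k : ℝ) * Δx)..(((k : ℝ) + 1) * Δx), ω x)
    (ρ : ℤ → ℝ) (hρ : ∀ j : ℤ, ρ j ∈ Set.Icc 0 ρmax)
    (Vin : ℤ → ℝ)
    (hVin : ∀ j : ℤ,
      Vin j = ∑ k ∈ Finset.Icc (0 : ℤ) (min (-j - 2) ((Nη : ℤ) - 1)),
        γ k * v (ρ (j + k + 1))) :
    (∀ j : ℤ, j ≤ -1 →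
      Vin (j - 1) * ρmax - Vin j * ρ j ≤ (γ 0 * nvd * ρmax + Vin j) * (ρmax - ρ j)) ∧
    (∀ j : ℤ, 0 ≤ j → Vin (j - 1) * ρmax - Vin j * ρ j ≤ Vin j * (ρmax - ρ j)) := by
  -- Lipschitz-type bound `v x ≤ nvd * (ρmax - x)` on `[0, ρmax]`.
  have hvd : DifferentiableOn ℝ v (Set.Icc 0 ρmax) := hv.differentiableOn (by norm_num)
  have hBdd : BddAbove ((fun x => |deriv v x|) '' Set.Icc 0 ρmax) := by
    have hg : ContinuousOn (fun x => |derivWithin v (Set.Icc 0 ρmax) x|) (Set.Icc 0 ρmax) :=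
      (hv.continuousOn_derivWithin (uniqueDiffOn_Icc hρmax) (by norm_num)).abs
    have hB1 : BddAbove ((fun x => |derivWithin v (Set.Icc 0 ρmax) x|) '' Set.Icc 0 ρmax) :=
      (isCompact_Icc.image_of_continuousOn hg).bddAbove
    refine BddAbove.mono ?_ ((hB1.insert (|deriv v ρmax|)).insert (|deriv v 0|))
    rintro _ ⟨x, hx, rfl⟩
    rcases eq_or_lt_of_le hx.1 with h0 | h0
    · exact Set.mem_insert_iff.2 (Or.inl (by rw [← h0]))
    rcases eq_or_lt_of_le hx.2 with h1 | h1
    · exact Set.mem_insert_iff.2 (Or.inr (Set.mem_insert_iff.2 (Or.inl (by rw [h1]))))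
    refine Set.mem_insert_iff.2 (Or.inr (Set.mem_insert_iff.2 (Or.inr ⟨x, hx, ?_⟩)))
    show |derivWithin v (Set.Icc 0 ρmax) x| = |deriv v x|
    rw [derivWithin_of_mem_nhds (Icc_mem_nhds h0 h1)]
  have hlip : ∀ x ∈ Set.Icc (0 : ℝ) ρmax, v x ≤ nvd * (ρmax - x) := by
    intro x hx
    rcases eq_or_lt_of_le hx.2 with h1 | h1
    · rw [h1, hvmax]; simp
    obtain ⟨c, hc, hceq⟩ := exists_deriv_eq_slope v h1
      (hvd.continuousOn.mono (Set.Icc_subset_Icc hx.1 le_rfl))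
      (fun y hy => ((hvd y ⟨le_trans hx.1 hy.1.le, hy.2.le⟩).differentiableAt
        (Icc_mem_nhds (lt_of_le_of_lt hx.1 hy.1) hy.2)).differentiableWithinAt)
    have hcmem : c ∈ Set.Icc (0 : ℝ) ρmax := ⟨le_trans hx.1 hc.1.le, hc.2.le⟩
    have hcle : |deriv v c| ≤ nvd := hnvd ▸ le_csSup hBdd ⟨c, hcmem, rfl⟩
    have hd : (0 : ℝ) < ρmax - x := by linarith
    have : v x = -deriv v c * (ρmax - x) := by
      rw [hceq, hvmax]; field_simp; ring
    rw [this]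
    have h2 : -deriv v c ≤ nvd := le_trans (neg_le_abs _) hcle
    exact mul_le_mul_of_nonneg_right h2 hd.le
  -- nonnegativity of γ k
  have hγnn : ∀ k : ℤ, 0 ≤ k → k ≤ (Nη : ℤ) - 1 → 0 ≤ γ k := by
    intro k hk0 hk1
    rw [hγ k hk0 hk1]
    have hk0' : (0 : ℝ) ≤ (k : ℝ) := by exact_mod_cast hk0
    apply intervalIntegral.integral_nonneg
    · nlinarith
    · intro x hx
      apply hωnn
      have hk1' : (k : ℝ) + 1 ≤ (Nη : ℝ) := by
        have : (k : ℝ) ≤ (Nη : ℝ) - 1 := by exact_mod_cast hk1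
        linarith
      constructor
      · nlinarith [hx.1]
      · rw [hηN]; nlinarith [hx.2]
  -- monotonicity step γ (k+1) ≤ γ k
  have hγmono : ∀ k : ℤ, 0 ≤ k → k + 1 ≤ (Nη : ℤ) - 1 → γ (k + 1) ≤ γ k := by
    intro k hk0 hk1
    have hk0' : (0 : ℝ) ≤ (k : ℝ) := by exact_mod_cast hk0
    have hk2' : (k : ℝ) + 2 ≤ (Nη : ℝ) := by
      have : (k : ℝ) + 1 ≤ (Nη : ℝ) - 1 := by exact_mod_cast hk1
      linarith
    rw [hγ k hk0 (by omega), hγ (k + 1) (by omega) hk1]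
    push_cast
    have hshift : (∫ x in (((k : ℝ) + 1) * Δx)..(((k : ℝ) + 1 + 1) * Δx), ω x)
        = ∫ x in ((k : ℝ) * Δx)..(((k : ℝ) + 1) * Δx), ω (x + Δx) := by
      rw [intervalIntegral.integral_comp_add_right]
      ring_nf
    rw [hshift]
    have hsub : Set.Icc ((k : ℝ) * Δx) (((k : ℝ) + 1) * Δx) ⊆ Set.Icc 0 η := by
      intro x hx
      constructor
      · nlinarith [hx.1]
      · rw [hηN]; nlinarith [hx.2]
    have hsub2 : Set.Icc ((k : ℝ) * Δx + Δx) (((k : ℝ) + 1) * Δx + Δx) ⊆ Set.Icc 0 η := by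
      intro x hx
      constructor
      · nlinarith [hx.1]
      · rw [hηN]; nlinarith [hx.2]
    have hle : (k : ℝ) * Δx ≤ ((k : ℝ) + 1) * Δx := by nlinarith
    apply intervalIntegral.integral_mono_on hle
    · have hc : ContinuousOn (fun x => ω (x + Δx)) (Set.Icc ((k : ℝ) * Δx) (((k : ℝ) + 1) * Δx)) := by
        apply (hω.continuousOn.mono hsub2).comp (Continuous.continuousOn (by continuity))
        intro x hx
        refine ⟨?_, ?_⟩ <;> simp only <;> [linarith [hx.1]; linarith [hx.2]]
      exact hc.intervalIntegrable_of_Icc hle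
    · exact ((hω.continuousOn).mono hsub).intervalIntegrable_of_Icc hle
    · intro x hx
      exact hωmono (hsub hx) (hsub2 ⟨by linarith [hx.1], by linarith [hx.2]⟩) (by linarith)
  constructor
  · -- main case j ≤ -1
    intro j hj
    set M : ℤ := min (-j - 2) ((Nη : ℤ) - 1) with hM
    set M' : ℤ := min (-(j - 1) - 2) ((Nη : ℤ) - 1) with hM'
    have hM'0 : 0 ≤ M' := le_min (by omega) (by omega)
    have hM'Nη : M' ≤ (Nη : ℤ) - 1 := min_le_right _ _
    have hMNη : M ≤ (Nη : ℤ) - 1 := min_le_right _ _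
    have hM'M : M' - 1 ≤ M := by omega
    have key : Vin (j - 1) ≤ γ 0 * v (ρ j) + Vin j := by
      rw [hVin (j - 1), hVin j]
      have e1 : ∑ k ∈ Finset.Icc (0 : ℤ) M', γ k * v (ρ (j - 1 + k + 1))
          = γ 0 * v (ρ j) + ∑ k ∈ Finset.Icc (0 : ℤ) (M' - 1), γ (k + 1) * v (ρ (j + k + 1)) := by
        have hins : Finset.Icc (0 : ℤ) M' = insert 0 (Finset.Icc 1 M') := by
          ext x; simp [Finset.mem_Icc]; omega
        rw [hins, Finset.sum_insert (by simp)]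
        congr 1
        · norm_num
        · refine Finset.sum_nbij' (fun k => k - 1) (fun k => k + 1) ?_ ?_ ?_ ?_ ?_
          · intro a ha; simp [Finset.mem_Icc] at ha ⊢; omega
          · intro a ha; simp [Finset.mem_Icc] at ha ⊢; omega
          · intro a _; ring
          · intro a _; ring
          · intro a _
            have : j - 1 + a + 1 = j + (a - 1) + 1 := by ring
            rw [this, sub_add_cancel]
      rw [e1]
      have step1 : ∑ k ∈ Finset.Icc (0 : ℤ) (M' - 1), γ (k + 1) * v (ρ (j + k + 1))
          ≤ ∑ k ∈ Finset.Icc (0 : ℤ) (M' - 1), γ k * v (ρ (j + k + 1)) := by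
        apply Finset.sum_le_sum
        intro k hk
        rw [Finset.mem_Icc] at hk
        exact mul_le_mul_of_nonneg_right (hγmono k hk.1 (by omega)) (hvnn _ (hρ _))
      have step2 : ∑ k ∈ Finset.Icc (0 : ℤ) (M' - 1), γ k * v (ρ (j + k + 1))
          ≤ ∑ k ∈ Finset.Icc (0 : ℤ) M, γ k * v (ρ (j + k + 1)) := by
        apply Finset.sum_le_sum_of_subset_of_nonneg (Finset.Icc_subset_Icc_right hM'M)
        intro k hk _
        rw [Finset.mem_Icc] at hk
        exact mul_nonneg (hγnn k hk.1 (by omega)) (hvnn _ (hρ _))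
      linarith
    have hρj := hρ j
    have hv0 : v (ρ j) ≤ nvd * (ρmax - ρ j) := hlip _ hρj
    have hγ0 : 0 ≤ γ 0 := hγnn 0 le_rfl (by omega)
    nlinarith [mul_le_mul_of_nonneg_right key hρmax.le,
      mul_le_mul_of_nonneg_left hv0 hγ0, mul_le_mul_of_nonneg_right
        (mul_le_mul_of_nonneg_left hv0 hγ0) hρmax.le]
  · -- case j ≥ 0 : both sums are empty
    intro j hj
    have h1 : Vin j = 0 := by
      rw [hVin j, Finset.Icc_eq_empty (by omega : ¬ (0 : ℤ) ≤ min (-j - 2) ((Nη : ℤ) - 1)),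
        Finset.sum_empty]
    have h2 : Vin (j - 1) = 0 := by
      rw [hVin (j - 1),
        Finset.Icc_eq_empty (by omega : ¬ (0 : ℤ) ≤ min (-(j - 1) - 2) ((Nη : ℤ) - 1)),
        Finset.sum_empty]
    rw [h1, h2]; norm_num
end

section
/- For all j ∈ ℤ with j ≤ −1 one has V^out_{j−1} ρ_max − V^out_j ρ_j ≤ V^out_j (ρ_max − ρ_j), and for all j ≥ 0 one has V^out_{j−1} ρ_max − V^out_j ρ_j ≤ (γ₀ ‖v'‖ ρ_max + V^out_j)(ρ_max − ρ_j). -/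
open MeasureTheory

/-- Shift a sum over an integer interval. -/
lemma stmt3_sum_shift (a b : ℤ) (f : ℤ → ℝ) :
    ∑ k ∈ Finset.Icc a b, f k = ∑ k ∈ Finset.Icc (a - 1) (b - 1), f (k + 1) := by
  rw [show Finset.Icc a b = (Finset.Icc (a - 1) (b - 1)).map (addRightEmbedding 1) by
    rw [Finset.map_add_right_Icc]; congr 1 <;> ring]
  rw [Finset.sum_map]
  rfl

/-- Split off the bottom term of a sum over `Icc 0 b` in `ℤ`. -/
lemma stmt3_sum_split (b : ℤ) (hb : 0 ≤ b) (f : ℤ → ℝ) :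
    ∑ k ∈ Finset.Icc (0 : ℤ) b, f k = f 0 + ∑ k ∈ Finset.Icc (1 : ℤ) b, f k := by
  rw [show Finset.Icc (0 : ℤ) b = insert 0 (Finset.Icc 1 b) by
    ext k; simp only [Finset.mem_insert, Finset.mem_Icc]; omega]
  rw [Finset.sum_insert (by simp)]

/-- For all `j ≤ -1`,
`V^out_{j-1} ρ_max - V^out_j ρ_j ≤ V^out_j (ρ_max - ρ_j)`, and for all `j ≥ 0`,
`V^out_{j-1} ρ_max - V^out_j ρ_j ≤ (γ₀ ‖v'‖ ρ_max + V^out_j)(ρ_max - ρ_j)`. -/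
theorem stmt_3
    (ρmax : ℝ) (hρmax : 0 < ρmax)
    (v : ℝ → ℝ)
    (hv : ContDiffOn ℝ 2 v (Set.Icc 0 ρmax))
    (hvmono : AntitoneOn v (Set.Icc 0 ρmax))
    (hvnn : ∀ x ∈ Set.Icc (0 : ℝ) ρmax, 0 ≤ v x)
    (hvmax : v ρmax = 0)
    (nvd : ℝ)
    (hnvd : nvd = sSup ((fun x => |deriv v x|) '' Set.Icc 0 ρmax))
    (η Δx : ℝ) (hη : 0 < η) (hΔx : 0 < Δx)
    (Nη : ℕ) (hNη : 0 < Nη) (hηN : η = (Nη : ℝ) * Δx)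
    (ω : ℝ → ℝ)
    (hω : ContDiffOn ℝ 1 ω (Set.Icc 0 η))
    (hωmono : AntitoneOn ω (Set.Icc 0 η))
    (hωnn : ∀ x ∈ Set.Icc (0 : ℝ) η, 0 ≤ ω x)
    (hωint : (∫ x in (0 : ℝ)..η, ω x) = 1)
    (γ : ℤ → ℝ)
    (hγ : ∀ k : ℤ, 0 ≤ k → k ≤ (Nη : ℤ) - 1 →
      γ k = ∫ x in ((k : ℝ) * Δx)..(((k : ℝ) + 1) * Δx), ω x)
    (ρ : ℤ → ℝ) (hρ : ∀ j : ℤ, ρ j ∈ Set.Icc 0 ρmax)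
    (Vout : ℤ → ℝ)
    (hVout : ∀ j : ℤ,
      Vout j = ∑ k ∈ Finset.Icc (max (-j - 1) 0) ((Nη : ℤ) - 1),
        γ k * v (ρ (j + k + 1))) :
    (∀ j : ℤ, j ≤ -1 → Vout (j - 1) * ρmax - Vout j * ρ j ≤ Vout j * (ρmax - ρ j)) ∧
    (∀ j : ℤ, 0 ≤ j →
      Vout (j - 1) * ρmax - Vout j * ρ j ≤ (γ 0 * nvd * ρmax + Vout j) * (ρmax - ρ j)) := by
  have hvρ : ∀ i : ℤ, 0 ≤ v (ρ i) := fun i => hvnn _ (hρ i)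
  -- nonnegativity of γ on the relevant range
  have hγnn : ∀ k : ℤ, 0 ≤ k → k ≤ (Nη : ℤ) - 1 → 0 ≤ γ k := by
    intro k hk0 hk1
    rw [hγ k hk0 hk1]
    apply intervalIntegral.integral_nonneg
    · nlinarith [hΔx]
    · intro u hu
      have hk0' : (0 : ℝ) ≤ (k : ℝ) := by exact_mod_cast hk0
      have hk1' : (k : ℝ) + 1 ≤ (Nη : ℝ) := by exact_mod_cast (by omega : k + 1 ≤ (Nη : ℤ))
      apply hωnn
      constructor
      · nlinarith [hu.1]
      · nlinarith [hu.2]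
  -- one-step monotonicity of γ
  have hγstep : ∀ k : ℤ, 0 ≤ k → k + 1 ≤ (Nη : ℤ) - 1 → γ (k + 1) ≤ γ k := by
    intro k hk0 hk1
    rw [hγ (k + 1) (by omega) hk1, hγ k hk0 (by omega)]
    have hk0' : (0 : ℝ) ≤ (k : ℝ) := by exact_mod_cast hk0
    have hk2' : (k : ℝ) + 2 ≤ (Nη : ℝ) := by exact_mod_cast (by omega : k + 2 ≤ (Nη : ℤ))
    have hsub : Set.Icc ((k : ℝ) * Δx) (((k : ℝ) + 1) * Δx) ⊆ Set.Icc 0 η := by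
      intro x hx
      constructor
      · nlinarith [hx.1]
      · rw [hηN]; nlinarith [hx.2]
    have hab : (k : ℝ) * Δx ≤ ((k : ℝ) + 1) * Δx := by nlinarith
    have hcast : ((k : ℤ) + 1 : ℤ) = ((k : ℝ) + 1 : ℝ) := by push_cast; ring
    have e1 : (∫ x in (((k : ℤ) + 1 : ℤ) : ℝ) * Δx..((((k : ℤ) + 1 : ℤ) : ℝ) + 1) * Δx, ω x)
        = ∫ x in ((k : ℝ) * Δx)..(((k : ℝ) + 1) * Δx), ω (x + Δx) := by
      rw [intervalIntegral.integral_comp_add_right ω Δx]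
      push_cast
      ring_nf
    rw [e1]
    have hωcont : ContinuousOn ω (Set.Icc ((k : ℝ) * Δx) (((k : ℝ) + 1) * Δx)) :=
      hω.continuousOn.mono hsub
    have hshiftmem : ∀ x ∈ Set.Icc ((k : ℝ) * Δx) (((k : ℝ) + 1) * Δx),
        x + Δx ∈ Set.Icc (0 : ℝ) η := by
      intro x hx
      constructor
      · nlinarith [hx.1]
      · rw [hηN]; nlinarith [hx.2]
    have hωcont' : ContinuousOn (fun x => ω (x + Δx))
        (Set.Icc ((k : ℝ) * Δx) (((k : ℝ) + 1) * Δx)) := by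
      apply hω.continuousOn.comp (Continuous.continuousOn (by continuity)) hshiftmem
    apply intervalIntegral.integral_mono_on hab
    · exact hωcont'.intervalIntegrable_of_Icc hab
    · exact hωcont.intervalIntegrable_of_Icc hab
    · intro x hx
      exact hωmono (hsub hx) (hshiftmem x hx) (by linarith [hΔx])
  -- bound on nvd
  have hdw : ContinuousOn (derivWithin v (Set.Icc 0 ρmax)) (Set.Icc 0 ρmax) :=
    hv.continuousOn_derivWithin (uniqueDiffOn_Icc hρmax) (by norm_num)
  obtain ⟨M, hM⟩ := isCompact_Icc.exists_bound_of_continuousOn hdw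
  have hbdd : BddAbove ((fun x => |deriv v x|) '' Set.Icc 0 ρmax) := by
    refine ⟨max M (max |deriv v 0| |deriv v ρmax|), ?_⟩
    rintro y ⟨x, hx, rfl⟩
    rcases eq_or_lt_of_le hx.1 with h0 | h0
    · rw [← h0]; exact le_max_of_le_right (le_max_left _ _)
    rcases eq_or_lt_of_le hx.2 with h1 | h1
    · rw [h1]; exact le_max_of_le_right (le_max_right _ _)
    have : deriv v x = derivWithin v (Set.Icc 0 ρmax) x :=
      (derivWithin_of_mem_nhds (Icc_mem_nhds h0 h1)).symm
    simp only [this]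
    exact le_max_of_le_left (by simpa [Real.norm_eq_abs] using hM x hx)
  have hmemmax : |deriv v ρmax| ∈ (fun x => |deriv v x|) '' Set.Icc 0 ρmax :=
    ⟨ρmax, ⟨hρmax.le, le_refl _⟩, rfl⟩
  have hnvd0 : 0 ≤ nvd := by
    rw [hnvd]
    exact le_trans (abs_nonneg _) (le_csSup hbdd hmemmax)
  -- key pointwise estimate: v r ≤ nvd * (ρmax - r)
  have hkey : ∀ r ∈ Set.Icc (0 : ℝ) ρmax, v r ≤ nvd * (ρmax - r) := by
    intro r hr
    rcases eq_or_lt_of_le hr.2 with heq | hlt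
    · rw [heq, hvmax]; simp
    · have hcont : ContinuousOn v (Set.Icc r ρmax) :=
        hv.continuousOn.mono (Set.Icc_subset_Icc hr.1 le_rfl)
      have hdiff : DifferentiableOn ℝ v (Set.Ioo r ρmax) := by
        intro x hx
        have hx0 : 0 < x := lt_of_le_of_lt hr.1 hx.1
        exact ((hv.differentiableOn (by norm_num) x ⟨hx0.le, hx.2.le⟩).differentiableAt
          (Icc_mem_nhds hx0 hx.2)).differentiableWithinAt
      obtain ⟨c, hc, hc'⟩ := exists_deriv_eq_slope v hlt hcont hdiff
      have hcmem : c ∈ Set.Icc (0 : ℝ) ρmax := ⟨hr.1.trans hc.1.le, hc.2.le⟩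
      have hcle : |deriv v c| ≤ nvd := by
        rw [hnvd]; exact le_csSup hbdd ⟨c, hcmem, rfl⟩
      rw [hvmax] at hc'
      have hne : ρmax - r ≠ 0 := by linarith
      have hvr : v r = -deriv v c * (ρmax - r) := by
        field_simp at hc'
        linarith [hc']
      rw [hvr]
      have : -deriv v c ≤ nvd := (neg_le_abs _).trans hcle
      nlinarith [this, sub_nonneg.mpr hr.2]
  constructor
  · -- case j ≤ -1
    intro j hj
    have e2 : max (-j - 1) 0 = -j - 1 := by omega
    have e1 : max (-(j - 1) - 1) 0 = -j := by omega
    have h1 : Vout (j - 1) ≤ Vout j := by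
      rw [hVout (j - 1), hVout j, e1, e2]
      rw [stmt3_sum_shift (-j) ((Nη : ℤ) - 1) (fun k => γ k * v (ρ (j - 1 + k + 1)))]
      have eidx : ∀ k : ℤ, j - 1 + (k + 1) + 1 = j + k + 1 := by intro k; ring
      calc ∑ k ∈ Finset.Icc (-j - 1) ((Nη : ℤ) - 1 - 1), γ (k + 1) * v (ρ (j - 1 + (k + 1) + 1))
          = ∑ k ∈ Finset.Icc (-j - 1) ((Nη : ℤ) - 1 - 1), γ (k + 1) * v (ρ (j + k + 1)) := by
            apply Finset.sum_congr rfl; intro k _; rw [eidx k]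
        _ ≤ ∑ k ∈ Finset.Icc (-j - 1) ((Nη : ℤ) - 1 - 1), γ k * v (ρ (j + k + 1)) := by
            apply Finset.sum_le_sum
            intro k hk
            rw [Finset.mem_Icc] at hk
            have hk0 : 0 ≤ k := by omega
            exact mul_le_mul_of_nonneg_right (hγstep k hk0 (by omega)) (hvρ _)
        _ ≤ ∑ k ∈ Finset.Icc (-j - 1) ((Nη : ℤ) - 1), γ k * v (ρ (j + k + 1)) := by
            apply Finset.sum_le_sum_of_subset_of_nonneg
            · exact Finset.Icc_subset_Icc_right (by omega)
            · intro k hk _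
              rw [Finset.mem_Icc] at hk
              exact mul_nonneg (hγnn k (by omega) hk.2) (hvρ _)
    nlinarith [h1, hρmax]
  · -- case j ≥ 0
    intro j hj
    have e2 : max (-j - 1) 0 = 0 := by omega
    have e1 : max (-(j - 1) - 1) 0 = 0 := by omega
    have hNη1 : (0 : ℤ) ≤ (Nη : ℤ) - 1 := by omega
    have h1 : Vout (j - 1) ≤ γ 0 * v (ρ j) + Vout j := by
      rw [hVout (j - 1), e1]
      rw [stmt3_sum_split ((Nη : ℤ) - 1) hNη1 (fun k => γ k * v (ρ (j - 1 + k + 1)))]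
      have e0 : j - 1 + 0 + 1 = j := by ring
      rw [e0]
      have h2 : ∑ k ∈ Finset.Icc (1 : ℤ) ((Nη : ℤ) - 1), γ k * v (ρ (j - 1 + k + 1)) ≤ Vout j := by
        rw [stmt3_sum_shift 1 ((Nη : ℤ) - 1) (fun k => γ k * v (ρ (j - 1 + k + 1)))]
        rw [hVout j, e2]
        have : (1 : ℤ) - 1 = 0 := by ring
        rw [this]
        calc ∑ k ∈ Finset.Icc (0 : ℤ) ((Nη : ℤ) - 1 - 1), γ (k + 1) * v (ρ (j - 1 + (k + 1) + 1))
            = ∑ k ∈ Finset.Icc (0 : ℤ) ((Nη : ℤ) - 1 - 1), γ (k + 1) * v (ρ (j + k + 1)) := by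
              apply Finset.sum_congr rfl; intro k _; congr 2; ring
          _ ≤ ∑ k ∈ Finset.Icc (0 : ℤ) ((Nη : ℤ) - 1 - 1), γ k * v (ρ (j + k + 1)) := by
              apply Finset.sum_le_sum
              intro k hk
              rw [Finset.mem_Icc] at hk
              exact mul_le_mul_of_nonneg_right (hγstep k hk.1 (by omega)) (hvρ _)
          _ ≤ ∑ k ∈ Finset.Icc (0 : ℤ) ((Nη : ℤ) - 1), γ k * v (ρ (j + k + 1)) := by
              apply Finset.sum_le_sum_of_subset_of_nonneg
              · exact Finset.Icc_subset_Icc_right (by omega)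
              · intro k hk _
                rw [Finset.mem_Icc] at hk
                exact mul_nonneg (hγnn k hk.1 hk.2) (hvρ _)
      linarith [h2]
    have hγ0 : 0 ≤ γ 0 := hγnn 0 le_rfl hNη1
    have hB : v (ρ j) ≤ nvd * (ρmax - ρ j) := hkey (ρ j) (hρ j)
    have hr2 : ρ j ≤ ρmax := (hρ j).2
    nlinarith [mul_le_mul_of_nonneg_right h1 hρmax.le,
      mul_le_mul_of_nonneg_left hB (mul_nonneg hγ0 hρmax.le)]
end

section
/- Maximum principle for the 1-to-2 junction scheme: if the initial data satisfy 0 ≤ ρ⁰_{1,j} ≤ ρ₁_max for all j ≤ −1 and 0 ≤ ρ⁰_{e,j} ≤ ρ_e_max for all j ≥ 0, e ∈ {2,3}, and the CFL condition λ ≤ 1/(γ₀ ‖v'‖ ‖ρ‖ + 2‖v‖) holds, then for every n ∈ ℕ one has 0 ≤ ρⁿ_{1,j} ≤ ρ₁_max for all j ≤ −1 and 0 ≤ ρⁿ_{e,j} ≤ ρ_e_max for all j ≥ 0, e ∈ {2,3}. -/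
open MeasureTheory

open MeasureTheory

/-- Partial sums of nonnegative γ are at most the full sum. -/
lemma stmt4_sum_γ_le (N : ℤ) (γ : ℤ → ℝ)
    (hγnn : ∀ k : ℤ, 0 ≤ k → k ≤ N - 1 → 0 ≤ γ k)
    (hsum : ∑ k ∈ Finset.Icc (0:ℤ) (N-1), γ k = 1)
    (a b : ℤ) (ha : 0 ≤ a) (hb : b ≤ N - 1) :
    ∑ k ∈ Finset.Icc a b, γ k ≤ 1 := by
  rw [← hsum]
  apply Finset.sum_le_sum_of_subset_of_nonneg
  · intro x hx; simp only [Finset.mem_Icc] at *; omega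
  · intro i hi _; simp only [Finset.mem_Icc] at hi; exact hγnn i hi.1 hi.2

/-- Bounds for the discrete nonlocal velocity. -/
lemma stmt4_V_bounds (N : ℤ) (γ : ℤ → ℝ)
    (hγnn : ∀ k : ℤ, 0 ≤ k → k ≤ N - 1 → 0 ≤ γ k)
    (hsum : ∑ k ∈ Finset.Icc (0:ℤ) (N-1), γ k = 1)
    (nv : ℝ) (hnv0 : 0 ≤ nv)
    (a b : ℤ) (ha : 0 ≤ a) (hb : b ≤ N - 1)
    (w : ℤ → ℝ) (hw : ∀ k ∈ Finset.Icc a b, 0 ≤ w k ∧ w k ≤ nv) :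
    0 ≤ (∑ k ∈ Finset.Icc a b, γ k * w k) ∧ (∑ k ∈ Finset.Icc a b, γ k * w k) ≤ nv := by
  have hγ' : ∀ k ∈ Finset.Icc a b, 0 ≤ γ k := by
    intro k hk
    simp only [Finset.mem_Icc] at hk
    exact hγnn k (le_trans ha hk.1) (le_trans hk.2 hb)
  constructor
  · exact Finset.sum_nonneg fun k hk => mul_nonneg (hγ' k hk) (hw k hk).1
  · calc (∑ k ∈ Finset.Icc a b, γ k * w k) ≤ ∑ k ∈ Finset.Icc a b, γ k * nv :=
        Finset.sum_le_sum fun k hk => mul_le_mul_of_nonneg_left (hw k hk).2 (hγ' k hk)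
    _ = (∑ k ∈ Finset.Icc a b, γ k) * nv := by rw [← Finset.sum_mul]
    _ ≤ 1 * nv := mul_le_mul_of_nonneg_right (stmt4_sum_γ_le N γ hγnn hsum a b ha hb) hnv0
    _ = nv := one_mul nv

/-- Generic shift estimate. -/
lemma stmt4_shift (N : ℤ) (γ : ℤ → ℝ)
    (hγnn : ∀ k : ℤ, 0 ≤ k → k ≤ N - 1 → 0 ≤ γ k)
    (hγmono : ∀ k : ℤ, 0 ≤ k → k + 1 ≤ N - 1 → γ (k+1) ≤ γ k)
    (M' M : ℤ) (hM'0 : 0 ≤ M') (hM' : M' ≤ N - 1) (hMM : M' - 1 ≤ M) (hM : M ≤ N - 1)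
    (u : ℤ → ℝ) (hu : ∀ k : ℤ, 0 ≤ k → k ≤ M + 1 → 0 ≤ u k) :
    ∑ k ∈ Finset.Icc (0:ℤ) M', γ k * u k ≤
      γ 0 * u 0 + ∑ k ∈ Finset.Icc (0:ℤ) M, γ k * u (k+1) := by
  have h0 : (0:ℤ) ∈ Finset.Icc (0:ℤ) M' := by simp [hM'0]
  rw [← Finset.add_sum_erase _ _ h0, Finset.Icc_erase_left]
  have hIoc : Finset.Ioc (0:ℤ) M' = Finset.map (addRightEmbedding 1) (Finset.Icc 0 (M'-1)) := by
    rw [Finset.map_add_right_Icc]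
    ext x; simp only [Finset.mem_Ioc, Finset.mem_Icc]; omega
  rw [hIoc, Finset.sum_map]
  simp only [addRightEmbedding_apply]
  have step1 : ∑ k ∈ Finset.Icc (0:ℤ) (M'-1), γ (k+1) * u (k+1) ≤
      ∑ k ∈ Finset.Icc (0:ℤ) (M'-1), γ k * u (k+1) := by
    apply Finset.sum_le_sum
    intro k hk
    simp only [Finset.mem_Icc] at hk
    exact mul_le_mul_of_nonneg_right (hγmono k hk.1 (by omega)) (hu (k+1) (by omega) (by omega))
  have step2 : ∑ k ∈ Finset.Icc (0:ℤ) (M'-1), γ k * u (k+1) ≤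
      ∑ k ∈ Finset.Icc (0:ℤ) M, γ k * u (k+1) := by
    apply Finset.sum_le_sum_of_subset_of_nonneg
    · intro x hx; simp only [Finset.mem_Icc] at *; omega
    · intro i hi _
      simp only [Finset.mem_Icc] at hi
      exact mul_nonneg (hγnn i hi.1 (by omega)) (hu (i+1) (by omega) (by omega))
  linarith

/-- Generic monotonicity estimate. -/
lemma stmt4_mono (N : ℤ) (γ : ℤ → ℝ)
    (hγnn : ∀ k : ℤ, 0 ≤ k → k ≤ N - 1 → 0 ≤ γ k)
    (hγmono : ∀ k : ℤ, 0 ≤ k → k + 1 ≤ N - 1 → γ (k+1) ≤ γ k)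
    (a : ℤ) (ha : 1 ≤ a)
    (u : ℤ → ℝ) (hu : ∀ k : ℤ, a - 1 ≤ k → k ≤ N - 1 → 0 ≤ u (k+1)) :
    ∑ k ∈ Finset.Icc a (N-1), γ k * u k ≤
      ∑ k ∈ Finset.Icc (a-1) (N-1), γ k * u (k+1) := by
  have hmap : Finset.Icc a (N-1) = Finset.map (addRightEmbedding 1) (Finset.Icc (a-1) (N-2)) := by
    rw [Finset.map_add_right_Icc]
    congr 1 <;> omega
  rw [hmap, Finset.sum_map]
  simp only [addRightEmbedding_apply]
  have step1 : ∑ k ∈ Finset.Icc (a-1) (N-2), γ (k+1) * u (k+1) ≤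
      ∑ k ∈ Finset.Icc (a-1) (N-2), γ k * u (k+1) := by
    apply Finset.sum_le_sum
    intro k hk
    simp only [Finset.mem_Icc] at hk
    exact mul_le_mul_of_nonneg_right (hγmono k (by omega) (by omega)) (hu k (by omega) (by omega))
  have step2 : ∑ k ∈ Finset.Icc (a-1) (N-2), γ k * u (k+1) ≤
      ∑ k ∈ Finset.Icc (a-1) (N-1), γ k * u (k+1) := by
    apply Finset.sum_le_sum_of_subset_of_nonneg
    · intro x hx; simp only [Finset.mem_Icc] at *; omega
    · intro i hi _
      simp only [Finset.mem_Icc] at hi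
      exact mul_nonneg (hγnn i (by omega) hi.2) (hu i hi.1 hi.2)
  linarith

/-- Facts about the sups of `v` and `|deriv v|` on `[0, ρmax]`. -/
lemma stmt4_sup_facts (ρmax : ℝ) (h : 0 < ρmax) (v : ℝ → ℝ)
    (hv : ContDiffOn ℝ 2 v (Set.Icc 0 ρmax)) (hvmax : v ρmax = 0) :
    (∀ x ∈ Set.Icc (0:ℝ) ρmax, v x ≤ sSup (v '' Set.Icc 0 ρmax)) ∧
    (∀ a ∈ Set.Icc (0:ℝ) ρmax,
      v a ≤ sSup ((fun x => |deriv v x|) '' Set.Icc 0 ρmax) * (ρmax - a)) ∧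
    0 ≤ sSup ((fun x => |deriv v x|) '' Set.Icc 0 ρmax) := by
  have hcont : ContinuousOn v (Set.Icc 0 ρmax) := hv.continuousOn
  have bdd1 : BddAbove (v '' Set.Icc 0 ρmax) := isCompact_Icc.bddAbove_image hcont
  have hdiffAt : ∀ x ∈ Set.Ioo (0:ℝ) ρmax, DifferentiableAt ℝ v x := by
    intro x hx
    have h1 : DifferentiableWithinAt ℝ v (Set.Icc 0 ρmax) x :=
      (hv.differentiableOn (by norm_num)) x (Set.Ioo_subset_Icc_self hx)
    exact h1.differentiableAt (Icc_mem_nhds hx.1 hx.2)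
  -- continuity of derivWithin and boundedness
  have hdW : ContinuousOn (derivWithin v (Set.Icc 0 ρmax)) (Set.Icc 0 ρmax) :=
    hv.continuousOn_derivWithin (uniqueDiffOn_Icc h) (by norm_num)
  obtain ⟨M, hM⟩ := isCompact_Icc.bddAbove_image (hdW.abs)
  have bdd2 : BddAbove ((fun x => |deriv v x|) '' Set.Icc 0 ρmax) := by
    refine ⟨max M (max |deriv v 0| |deriv v ρmax|), ?_⟩
    rintro y ⟨x, hx, rfl⟩
    by_cases hxi : x ∈ Set.Ioo (0:ℝ) ρmax
    · have heq : derivWithin v (Set.Icc 0 ρmax) x = deriv v x :=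
        derivWithin_of_mem_nhds (Icc_mem_nhds hxi.1 hxi.2)
      have : |derivWithin v (Set.Icc 0 ρmax) x| ≤ M := hM ⟨x, hx, rfl⟩
      rw [heq] at this
      exact le_trans this (le_max_left _ _)
    · have : x = 0 ∨ x = ρmax := by
        rcases hx with ⟨h1, h2⟩
        rcases lt_or_eq_of_le h1 with h1' | h1'
        · rcases lt_or_eq_of_le h2 with h2' | h2'
          · exact absurd ⟨h1', h2'⟩ hxi
          · right; exact h2'
        · left; exact h1'.symm
      rcases this with rfl | rfl
      · exact le_trans (le_max_left _ _) (le_max_right _ _)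
      · exact le_trans (le_max_right _ _) (le_max_right _ _)
  have hsup0 : 0 ≤ sSup ((fun x => |deriv v x|) '' Set.Icc 0 ρmax) := by
    have : |deriv v 0| ≤ sSup ((fun x => |deriv v x|) '' Set.Icc 0 ρmax) :=
      le_csSup bdd2 ⟨0, by constructor <;> [exact le_rfl; exact le_of_lt h], rfl⟩
    exact le_trans (abs_nonneg _) this
  refine ⟨fun x hx => le_csSup bdd1 ⟨x, hx, rfl⟩, fun a ha => ?_, hsup0⟩
  set S := sSup ((fun x => |deriv v x|) '' Set.Icc 0 ρmax) with hS
  rcases eq_or_lt_of_le ha.2 with heq | hlt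
  · rw [heq, hvmax]; simp
  · have hcont' : ContinuousOn v (Set.Icc a ρmax) :=
      hcont.mono (Set.Icc_subset_Icc ha.1 le_rfl)
    have hderiv : ∀ x ∈ Set.Ioo a ρmax, HasDerivAt v (deriv v x) x := by
      intro x hx
      exact (hdiffAt x ⟨lt_of_le_of_lt ha.1 hx.1, hx.2⟩).hasDerivAt
    obtain ⟨c, hc, hceq⟩ := exists_hasDerivAt_eq_slope v (deriv v) hlt hcont' hderiv
    have hcmem : c ∈ Set.Icc (0:ℝ) ρmax :=
      ⟨le_of_lt (lt_of_le_of_lt ha.1 hc.1), le_of_lt hc.2⟩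
    have hcS : |deriv v c| ≤ S := le_csSup bdd2 ⟨c, hcmem, rfl⟩
    have hne : ρmax - a ≠ 0 := by linarith
    have hva : v a = -(deriv v c) * (ρmax - a) := by
      rw [hvmax] at hceq
      have : deriv v c * (ρmax - a) = 0 - v a := by
        rw [hceq]; field_simp
      linarith
    rw [hva]
    have h1 : -(deriv v c) ≤ |deriv v c| := neg_le_abs _
    nlinarith [sub_pos.mpr hlt]


lemma stmt4_γ_facts (η Δx : ℝ) (hη : 0 < η) (hΔx : 0 < Δx)
    (Nη : ℕ) (hNη : 0 < Nη) (hηN : η = (Nη : ℝ) * Δx)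
    (ω : ℝ → ℝ)
    (hω : ContDiffOn ℝ 1 ω (Set.Icc 0 η))
    (hωmono : AntitoneOn ω (Set.Icc 0 η))
    (hωnn : ∀ x ∈ Set.Icc (0 : ℝ) η, 0 ≤ ω x)
    (hωint : (∫ x in (0 : ℝ)..η, ω x) = 1)
    (γ : ℤ → ℝ)
    (hγ : ∀ k : ℤ, 0 ≤ k → k ≤ (Nη : ℤ) - 1 →
      γ k = ∫ x in ((k : ℝ) * Δx)..(((k : ℝ) + 1) * Δx), ω x) :
    (∀ k : ℤ, 0 ≤ k → k ≤ (Nη : ℤ) - 1 → 0 ≤ γ k) ∧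
    (∀ k : ℤ, 0 ≤ k → k + 1 ≤ (Nη : ℤ) - 1 → γ (k+1) ≤ γ k) ∧
    (∑ k ∈ Finset.Icc (0:ℤ) ((Nη : ℤ)-1), γ k = 1) := by
  have hωcont : ContinuousOn ω (Set.Icc 0 η) := hω.continuousOn
  -- subinterval inclusion
  have hsub : ∀ k : ℤ, 0 ≤ k → k + 1 ≤ (Nη : ℤ) →
      Set.Icc ((k:ℝ) * Δx) (((k:ℝ)+1) * Δx) ⊆ Set.Icc (0:ℝ) η := by
    intro k hk0 hk1
    have h0 : (0:ℝ) ≤ (k:ℝ) := by exact_mod_cast hk0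
    have h1 : (k:ℝ) + 1 ≤ (Nη:ℝ) := by exact_mod_cast hk1
    apply Set.Icc_subset_Icc
    · positivity
    · rw [hηN]; nlinarith
  have hint : ∀ k : ℤ, 0 ≤ k → k + 1 ≤ (Nη : ℤ) →
      IntervalIntegrable ω volume ((k:ℝ) * Δx) (((k:ℝ)+1) * Δx) := by
    intro k hk0 hk1
    apply ContinuousOn.intervalIntegrable
    rw [Set.uIcc_of_le (by nlinarith)]
    exact hωcont.mono (hsub k hk0 hk1)
  have hγnn : ∀ k : ℤ, 0 ≤ k → k ≤ (Nη : ℤ) - 1 → 0 ≤ γ k := by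
    intro k hk0 hk1
    rw [hγ k hk0 hk1]
    apply intervalIntegral.integral_nonneg (by nlinarith)
    intro u hu
    exact hωnn u (hsub k hk0 (by omega) hu)
  refine ⟨hγnn, ?_, ?_⟩
  · -- monotonicity
    intro k hk0 hk1
    rw [hγ k hk0 (by omega), hγ (k+1) (by omega) hk1]
    push_cast
    have hshift : (∫ x in ((k:ℝ)+1) * Δx..(((k:ℝ)+1)+1) * Δx, ω x)
        = ∫ x in ((k:ℝ) * Δx)..(((k:ℝ)+1) * Δx), ω (x + Δx) := by
      rw [intervalIntegral.integral_comp_add_right (fun x => ω x) Δx]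
      congr 1 <;> ring
    rw [hshift]
    apply intervalIntegral.integral_mono_on (by nlinarith)
    · -- integrability of shifted
      apply ContinuousOn.intervalIntegrable
      rw [Set.uIcc_of_le (by nlinarith)]
      apply ContinuousOn.comp hωcont (Continuous.continuousOn (by continuity))
      intro x hx
      have h0 : (0:ℝ) ≤ (k:ℝ) := by exact_mod_cast hk0
      have h1 : (k:ℝ) + 2 ≤ (Nη:ℝ) := by
        have : k + 2 ≤ (Nη:ℤ) := by omega
        exact_mod_cast this
      simp only [Set.mem_Icc] at hx
      refine ⟨show (0:ℝ) ≤ x + Δx by nlinarith [hx.1], show x + Δx ≤ η by rw [hηN]; nlinarith [hx.2]⟩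
    · exact hint k hk0 (by omega)
    · intro x hx
      have h0 : (0:ℝ) ≤ (k:ℝ) := by exact_mod_cast hk0
      have h1 : (k:ℝ) + 2 ≤ (Nη:ℝ) := by
        have : k + 2 ≤ (Nη:ℤ) := by omega
        exact_mod_cast this
      rcases hx with ⟨hx1, hx2⟩
      have hxm : x ∈ Set.Icc (0:ℝ) η := by
        constructor
        · nlinarith
        · rw [hηN]; nlinarith
      have hxm' : x + Δx ∈ Set.Icc (0:ℝ) η := by
        constructor
        · nlinarith
        · rw [hηN]; nlinarith
      exact hωmono hxm hxm' (by linarith)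
  · -- total sum = 1
    have key : ∑ i ∈ Finset.range Nη, (∫ x in ((i:ℝ) * Δx)..(((i:ℝ)+1) * Δx), ω x)
        = ∫ x in (0:ℝ)..((Nη:ℝ) * Δx), ω x := by
      have := intervalIntegral.sum_integral_adjacent_intervals
        (a := fun i : ℕ => (i:ℝ) * Δx) (f := ω) (μ := volume) (n := Nη) ?_
      · simpa using this
      · intro i hi
        have := hint (i:ℤ) (by positivity) (by exact_mod_cast by omega : ((i:ℤ)+1 ≤ (Nη:ℤ)))
        push_cast at this ⊢
        convert this using 2
    have conv : ∀ m : ℕ, ∑ k ∈ Finset.Icc (0:ℤ) ((m:ℤ)-1), γ k = ∑ i ∈ Finset.range m, γ (i:ℤ) := by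
      intro m
      induction m with
      | zero => simp
      | succ p ih =>
        rw [Finset.sum_range_succ, ← ih]
        have hins : Finset.Icc (0:ℤ) (((p:ℤ)+1)-1) = insert (p:ℤ) (Finset.Icc 0 ((p:ℤ)-1)) := by
          ext x; simp only [Finset.mem_Icc, Finset.mem_insert]; omega
        push_cast
        rw [hins, Finset.sum_insert (by simp)]
        ring
    rw [conv Nη]
    have : ∀ i ∈ Finset.range Nη, γ (i:ℤ) = ∫ x in ((i:ℝ) * Δx)..(((i:ℝ)+1) * Δx), ω x := by
      intro i hi
      simp only [Finset.mem_range] at hi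
      rw [hγ (i:ℤ) (by positivity) (by omega)]
      push_cast
      ring_nf
    rw [Finset.sum_congr rfl this, key, ← hηN, hωint]

/-- One time step on an outgoing road preserves the invariant region. -/
lemma stmt4_out_step (N : ℤ) (hN : 1 ≤ N) (γ : ℤ → ℝ)
    (hγnn : ∀ k : ℤ, 0 ≤ k → k ≤ N - 1 → 0 ≤ γ k)
    (hγmono : ∀ k : ℤ, 0 ≤ k → k + 1 ≤ N - 1 → γ (k+1) ≤ γ k)
    (hγsum : ∑ k ∈ Finset.Icc (0:ℤ) (N-1), γ k = 1)
    (ρmax nv nvd : ℝ) (hρmax : 0 < ρmax) (hnv0 : 0 ≤ nv) (hnvd0 : 0 ≤ nvd)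
    (v : ℝ → ℝ)
    (hvnn : ∀ x ∈ Set.Icc (0:ℝ) ρmax, 0 ≤ v x)
    (hvnv : ∀ x ∈ Set.Icc (0:ℝ) ρmax, v x ≤ nv)
    (hvlip : ∀ x ∈ Set.Icc (0:ℝ) ρmax, v x ≤ nvd * (ρmax - x))
    (lam : ℝ) (hlam : 0 < lam) (hK : lam * (γ 0 * nvd * ρmax + nv) ≤ 1)
    (r : ℤ → ℝ) (hr : ∀ j : ℤ, 0 ≤ j → r j ∈ Set.Icc 0 ρmax)
    (V : ℤ → ℝ)
    (hV : ∀ j : ℤ, V j = ∑ k ∈ Finset.Icc (max (-j-1) 0) (N-1), γ k * v (r (j+k+1)))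
    (F : ℤ → ℝ) (hF : ∀ j : ℤ, 0 ≤ j → F j = r j * V j)
    (hFin0 : 0 ≤ F (-1)) (hFin1 : F (-1) ≤ ρmax * V (-1)) :
    ∀ j : ℤ, 0 ≤ j → r j - lam * (F j - F (j-1)) ∈ Set.Icc 0 ρmax := by
  have hγ00 : 0 ≤ γ 0 := hγnn 0 le_rfl (by omega)
  -- V bounds for every j
  have hVb : ∀ j : ℤ, 0 ≤ V j ∧ V j ≤ nv := by
    intro j
    rw [hV j]
    apply stmt4_V_bounds N γ hγnn hγsum nv hnv0 _ _ (le_max_right _ _) le_rfl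
    intro k hk
    simp only [Finset.mem_Icc, le_max_iff] at hk
    have hj : 0 ≤ j + k + 1 := by omega
    exact ⟨hvnn _ (hr _ hj), hvnv _ (hr _ hj)⟩
  intro j hj
  have hrj := hr j hj
  -- shift estimate : V (j-1) ≤ γ 0 * v (r j) + V j
  have hshift : V (j-1) ≤ γ 0 * v (r j) + V j := by
    have e1 : V (j-1) = ∑ k ∈ Finset.Icc (0:ℤ) (N-1), γ k * v (r (j+k)) := by
      rw [hV (j-1)]
      have hm : max (-(j-1)-1) 0 = (0:ℤ) := by omega
      rw [hm]
      apply Finset.sum_congr rfl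
      intro k _
      rw [show j - 1 + k + 1 = j + k by ring]
    have e2 : V j = ∑ k ∈ Finset.Icc (0:ℤ) (N-1), γ k * v (r (j+k+1)) := by
      rw [hV j]
      have hm : max (-j-1) 0 = (0:ℤ) := by omega
      rw [hm]
    rw [e1, e2]
    have := stmt4_shift N γ hγnn hγmono (N-1) (N-1) (by omega) le_rfl (by omega) le_rfl
      (fun k => v (r (j+k))) (fun k hk0 hk1 => hvnn _ (hr _ (by omega)))
    simpa [show j + (0:ℤ) = j by ring, show ∀ k : ℤ, j + (k+1) = j + k + 1 by intro k; ring]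
      using this
  have hVj := hVb j
  have hVj1 := hVb (j-1)
  have hvrj0 := hvnn _ hrj
  have hvrjl := hvlip _ hrj
  -- bound on F (j-1)
  have hFj1 : 0 ≤ F (j-1) ∧ F (j-1) ≤ ρmax * V (j-1) := by
    rcases eq_or_lt_of_le hj with h0 | h1
    · have : j - 1 = -1 := by omega
      rw [this]; exact ⟨hFin0, hFin1⟩
    · have hj1 : 0 ≤ j - 1 := by omega
      have hrj1 := hr _ hj1
      rw [hF _ hj1]
      exact ⟨mul_nonneg hrj1.1 hVj1.1,
        mul_le_mul_of_nonneg_right hrj1.2 hVj1.1⟩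
  rw [hF j hj]
  constructor
  · -- lower bound
    have h1 : lam * V j ≤ 1 := by
      nlinarith [mul_le_mul_of_nonneg_left hVj.2 hlam.le,
        mul_nonneg hlam.le (mul_nonneg (mul_nonneg hγ00 hnvd0) hρmax.le)]
    nlinarith [hrj.1, hrj.2, hVj.1, hFj1.1]
  · -- upper bound
    have key : F (j-1) - r j * V j ≤ (γ 0 * nvd * ρmax + nv) * (ρmax - r j) := by
      have c1 : F (j-1) ≤ ρmax * (γ 0 * v (r j) + V j) :=
        le_trans hFj1.2 (mul_le_mul_of_nonneg_left hshift (le_of_lt hρmax))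
      have c2 : ρmax * (γ 0 * v (r j)) ≤ ρmax * (γ 0 * (nvd * (ρmax - r j))) := by
        apply mul_le_mul_of_nonneg_left _ (le_of_lt hρmax)
        exact mul_le_mul_of_nonneg_left hvrjl hγ00
      have c3 : (ρmax - r j) * V j ≤ (ρmax - r j) * nv :=
        mul_le_mul_of_nonneg_left hVj.2 (by linarith [hrj.2])
      nlinarith
    nlinarith [hrj.2, mul_le_mul_of_nonneg_left key (le_of_lt hlam),
      mul_nonneg (mul_nonneg hγ00 hnvd0) (le_of_lt hρmax)]
set_option maxHeartbeats 1000000 in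
/-- Maximum principle for the 1-to-2 junction scheme: if the initial data
satisfy `0 ≤ ρ⁰_{1,j} ≤ ρ₁max` for all `j ≤ -1` and `0 ≤ ρ⁰_{e,j} ≤ ρ_emax` for all
`j ≥ 0`, `e ∈ {2,3}`, and the CFL condition `λ ≤ 1/(γ₀ ‖v'‖ ‖ρ‖ + 2‖v‖)` holds, then the
same bounds propagate to every time step `n`. -/
theorem stmt_4
    (ρ1max ρ2max ρ3max : ℝ)
    (hρ1max : 0 < ρ1max) (hρ2max : 0 < ρ2max) (hρ3max : 0 < ρ3max)
    (v1 v2 v3 : ℝ → ℝ)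
    (hv1 : ContDiffOn ℝ 2 v1 (Set.Icc 0 ρ1max))
    (hv1mono : AntitoneOn v1 (Set.Icc 0 ρ1max))
    (hv1nn : ∀ x ∈ Set.Icc (0 : ℝ) ρ1max, 0 ≤ v1 x)
    (hv1max : v1 ρ1max = 0)
    (hv2 : ContDiffOn ℝ 2 v2 (Set.Icc 0 ρ2max))
    (hv2mono : AntitoneOn v2 (Set.Icc 0 ρ2max))
    (hv2nn : ∀ x ∈ Set.Icc (0 : ℝ) ρ2max, 0 ≤ v2 x)
    (hv2max : v2 ρ2max = 0)
    (hv3 : ContDiffOn ℝ 2 v3 (Set.Icc 0 ρ3max))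
    (hv3mono : AntitoneOn v3 (Set.Icc 0 ρ3max))
    (hv3nn : ∀ x ∈ Set.Icc (0 : ℝ) ρ3max, 0 ≤ v3 x)
    (hv3max : v3 ρ3max = 0)
    (η Δx : ℝ) (hη : 0 < η) (hΔx : 0 < Δx)
    (Nη : ℕ) (hNη : 0 < Nη) (hηN : η = (Nη : ℝ) * Δx)
    (ω : ℝ → ℝ)
    (hω : ContDiffOn ℝ 1 ω (Set.Icc 0 η))
    (hωmono : AntitoneOn ω (Set.Icc 0 η))
    (hωnn : ∀ x ∈ Set.Icc (0 : ℝ) η, 0 ≤ ω x)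
    (hωint : (∫ x in (0 : ℝ)..η, ω x) = 1)
    (γ : ℤ → ℝ)
    (hγ : ∀ k : ℤ, 0 ≤ k → k ≤ (Nη : ℤ) - 1 →
      γ k = ∫ x in ((k : ℝ) * Δx)..(((k : ℝ) + 1) * Δx), ω x)
    -- the norms ‖v‖, ‖v'‖, ‖ρ‖
    (nv nvd nρ : ℝ)
    (hnv : nv = max (sSup (v1 '' Set.Icc 0 ρ1max))
      (max (sSup (v2 '' Set.Icc 0 ρ2max)) (sSup (v3 '' Set.Icc 0 ρ3max))))
    (hnvd : nvd = max (sSup ((fun x => |deriv v1 x|) '' Set.Icc 0 ρ1max))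
      (max (sSup ((fun x => |deriv v2 x|) '' Set.Icc 0 ρ2max))
        (sSup ((fun x => |deriv v3 x|) '' Set.Icc 0 ρ3max))))
    (hnρ : nρ = max ρ1max (max ρ2max ρ3max))
    -- distribution parameters
    (α2 α3 : ℝ) (hα2 : 0 ≤ α2) (hα3 : 0 ≤ α3) (hα : α2 + α3 = 1)
    -- the coupling function g and its structural assumptions
    (g : ℝ → ℝ → ℝ → ℝ)
    (hg_bounds : ∀ r ∈ Set.Icc (0 : ℝ) ρ1max, ∀ V2 V3 : ℝ, 0 ≤ V2 → 0 ≤ V3 →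
      0 ≤ g r V2 V3 ∧ g r V2 V3 ≤ r * (α2 * V2 + α3 * V3))
    (hg_max : ∀ r ∈ Set.Icc (0 : ℝ) ρ1max, ∀ V2 V3 : ℝ, 0 ≤ V2 → 0 ≤ V3 →
      g r V2 V3 ≤ g ρ1max V2 V3)
    (hg_monoV2 : ∀ r ∈ Set.Icc (0 : ℝ) ρ1max, ∀ V2 V2' V3 : ℝ,
      0 ≤ V2 → V2 ≤ V2' → 0 ≤ V3 → g r V2 V3 ≤ g r V2' V3)
    (hg_monoV3 : ∀ r ∈ Set.Icc (0 : ℝ) ρ1max, ∀ V2 V3 V3' : ℝ,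
      0 ≤ V2 → 0 ≤ V3 → V3 ≤ V3' → g r V2 V3 ≤ g r V2 V3')
    (L : ℝ) (hL : L ≤ nv)
    (hg_lip : ∀ r ∈ Set.Icc (0 : ℝ) ρ1max, ∀ r' ∈ Set.Icc (0 : ℝ) ρ1max,
      ∀ V2 V3 : ℝ, 0 ≤ V2 → 0 ≤ V3 →
        |g r V2 V3 - g r' V2 V3| ≤ L * |r - r'|)
    -- the scheme
    (lam : ℝ) (hlam : 0 < lam)
    (hCFL : lam ≤ 1 / (γ 0 * nvd * nρ + 2 * nv))
    (ρ1 ρ2 ρ3 : ℕ → ℤ → ℝ)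
    (V1 V2 V3 : ℕ → ℤ → ℝ)
    (hV1 : ∀ n : ℕ, ∀ j : ℤ, j ≤ -1 →
      V1 n j = ∑ k ∈ Finset.Icc (0 : ℤ) (min (-j - 2) ((Nη : ℤ) - 1)),
        γ k * v1 (ρ1 n (j + k + 1)))
    (hV2 : ∀ n : ℕ, ∀ j : ℤ,
      V2 n j = ∑ k ∈ Finset.Icc (max (-j - 1) 0) ((Nη : ℤ) - 1),
        γ k * v2 (ρ2 n (j + k + 1)))
    (hV3 : ∀ n : ℕ, ∀ j : ℤ,
      V3 n j = ∑ k ∈ Finset.Icc (max (-j - 1) 0) ((Nη : ℤ) - 1),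
        γ k * v3 (ρ3 n (j + k + 1)))
    (F1 F2 F3 : ℕ → ℤ → ℝ)
    (hF1 : ∀ n : ℕ, ∀ j : ℤ, j ≤ -1 →
      F1 n j = ρ1 n j * V1 n j + g (ρ1 n j) (V2 n j) (V3 n j))
    (hF2 : ∀ n : ℕ, ∀ j : ℤ, 0 ≤ j → F2 n j = ρ2 n j * V2 n j)
    (hF3 : ∀ n : ℕ, ∀ j : ℤ, 0 ≤ j → F3 n j = ρ3 n j * V3 n j)
    (hF2in : ∀ n : ℕ, 0 ≤ F2 n (-1) ∧ F2 n (-1) ≤ ρ2max * V2 n (-1))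
    (hF3in : ∀ n : ℕ, 0 ≤ F3 n (-1) ∧ F3 n (-1) ≤ ρ3max * V3 n (-1))
    (hup1 : ∀ n : ℕ, ∀ j : ℤ, j ≤ -1 →
      ρ1 (n + 1) j = ρ1 n j - lam * (F1 n j - F1 n (j - 1)))
    (hup2 : ∀ n : ℕ, ∀ j : ℤ, 0 ≤ j →
      ρ2 (n + 1) j = ρ2 n j - lam * (F2 n j - F2 n (j - 1)))
    (hup3 : ∀ n : ℕ, ∀ j : ℤ, 0 ≤ j →
      ρ3 (n + 1) j = ρ3 n j - lam * (F3 n j - F3 n (j - 1)))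
    -- initial data bounds
    (hinit1 : ∀ j : ℤ, j ≤ -1 → ρ1 0 j ∈ Set.Icc 0 ρ1max)
    (hinit2 : ∀ j : ℤ, 0 ≤ j → ρ2 0 j ∈ Set.Icc 0 ρ2max)
    (hinit3 : ∀ j : ℤ, 0 ≤ j → ρ3 0 j ∈ Set.Icc 0 ρ3max) :
    ∀ n : ℕ,
      (∀ j : ℤ, j ≤ -1 → ρ1 n j ∈ Set.Icc 0 ρ1max) ∧
      (∀ j : ℤ, 0 ≤ j → ρ2 n j ∈ Set.Icc 0 ρ2max) ∧
      (∀ j : ℤ, 0 ≤ j → ρ3 n j ∈ Set.Icc 0 ρ3max) := by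
  -- sup facts
  obtain ⟨hs1, hl1, hd1⟩ := stmt4_sup_facts ρ1max hρ1max v1 hv1 hv1max
  obtain ⟨hs2, hl2, hd2⟩ := stmt4_sup_facts ρ2max hρ2max v2 hv2 hv2max
  obtain ⟨hs3, hl3, hd3⟩ := stmt4_sup_facts ρ3max hρ3max v3 hv3 hv3max
  have hS1 : sSup (v1 '' Set.Icc 0 ρ1max) ≤ nv := by rw [hnv]; exact le_max_left _ _
  have hS2 : sSup (v2 '' Set.Icc 0 ρ2max) ≤ nv := by
    rw [hnv]; exact le_trans (le_max_left _ _) (le_max_right _ _)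
  have hS3 : sSup (v3 '' Set.Icc 0 ρ3max) ≤ nv := by
    rw [hnv]; exact le_trans (le_max_right _ _) (le_max_right _ _)
  have hD1 : sSup ((fun x => |deriv v1 x|) '' Set.Icc 0 ρ1max) ≤ nvd := by
    rw [hnvd]; exact le_max_left _ _
  have hD2 : sSup ((fun x => |deriv v2 x|) '' Set.Icc 0 ρ2max) ≤ nvd := by
    rw [hnvd]; exact le_trans (le_max_left _ _) (le_max_right _ _)
  have hD3 : sSup ((fun x => |deriv v3 x|) '' Set.Icc 0 ρ3max) ≤ nvd := by
    rw [hnvd]; exact le_trans (le_max_right _ _) (le_max_right _ _)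
  have hVnv1 : ∀ x ∈ Set.Icc (0:ℝ) ρ1max, v1 x ≤ nv := fun x hx => (hs1 x hx).trans hS1
  have hVnv2 : ∀ x ∈ Set.Icc (0:ℝ) ρ2max, v2 x ≤ nv := fun x hx => (hs2 x hx).trans hS2
  have hVnv3 : ∀ x ∈ Set.Icc (0:ℝ) ρ3max, v3 x ≤ nv := fun x hx => (hs3 x hx).trans hS3
  have hnv0 : 0 ≤ nv := by
    have := hVnv1 ρ1max ⟨hρ1max.le, le_rfl⟩
    have h0 := hv1nn ρ1max ⟨hρ1max.le, le_rfl⟩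
    linarith
  have hnvd0 : 0 ≤ nvd := le_trans hd1 hD1
  have hlip1 : ∀ a ∈ Set.Icc (0:ℝ) ρ1max, v1 a ≤ nvd * (ρ1max - a) := by
    intro a ha
    exact le_trans (hl1 a ha) (mul_le_mul_of_nonneg_right hD1 (by linarith [ha.2]))
  have hlip2 : ∀ a ∈ Set.Icc (0:ℝ) ρ2max, v2 a ≤ nvd * (ρ2max - a) := by
    intro a ha
    exact le_trans (hl2 a ha) (mul_le_mul_of_nonneg_right hD2 (by linarith [ha.2]))
  have hlip3 : ∀ a ∈ Set.Icc (0:ℝ) ρ3max, v3 a ≤ nvd * (ρ3max - a) := by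
    intro a ha
    exact le_trans (hl3 a ha) (mul_le_mul_of_nonneg_right hD3 (by linarith [ha.2]))
  -- γ facts
  obtain ⟨hγnn, hγmono, hγsum⟩ := stmt4_γ_facts η Δx hη hΔx Nη hNη hηN ω hω hωmono hωnn hωint γ hγ
  have hN1 : (1:ℤ) ≤ (Nη:ℤ) := by exact_mod_cast hNη
  have hγ00 : 0 ≤ γ 0 := hγnn 0 le_rfl (by omega)
  -- CFL consequences
  have hnρ1 : ρ1max ≤ nρ := by rw [hnρ]; exact le_max_left _ _
  have hnρ2 : ρ2max ≤ nρ := by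
    rw [hnρ]; exact le_trans (le_max_left _ _) (le_max_right _ _)
  have hnρ3 : ρ3max ≤ nρ := by
    rw [hnρ]; exact le_trans (le_max_right _ _) (le_max_right _ _)
  have hD0 : 0 ≤ γ 0 * nvd * nρ + 2 * nv := by
    have := mul_nonneg (mul_nonneg hγ00 hnvd0) (le_trans hρ1max.le hnρ1)
    linarith
  have hlamD : lam * (γ 0 * nvd * nρ + 2 * nv) ≤ 1 := by
    rcases eq_or_lt_of_le hD0 with h0 | h0
    · rw [← h0] at hCFL
      simp at hCFL
      linarith
    · rw [le_div_iff₀ h0] at hCFL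
      linarith
  have hK2 : lam * (γ 0 * nvd * ρ2max + nv) ≤ 1 := by
    have h1 : γ 0 * nvd * ρ2max ≤ γ 0 * nvd * nρ :=
      mul_le_mul_of_nonneg_left hnρ2 (mul_nonneg hγ00 hnvd0)
    have p1 : lam * (γ 0 * nvd * ρ2max) ≤ lam * (γ 0 * nvd * nρ) :=
      mul_le_mul_of_nonneg_left h1 hlam.le
    have p2 : 0 ≤ lam * nv := mul_nonneg hlam.le hnv0
    linarith only [p1, p2, hlamD]
  have hK3 : lam * (γ 0 * nvd * ρ3max + nv) ≤ 1 := by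
    have h1 : γ 0 * nvd * ρ3max ≤ γ 0 * nvd * nρ :=
      mul_le_mul_of_nonneg_left hnρ3 (mul_nonneg hγ00 hnvd0)
    have p1 : lam * (γ 0 * nvd * ρ3max) ≤ lam * (γ 0 * nvd * nρ) :=
      mul_le_mul_of_nonneg_left h1 hlam.le
    have p2 : 0 ≤ lam * nv := mul_nonneg hlam.le hnv0
    linarith only [p1, p2, hlamD]
  have hK1 : lam * (γ 0 * nvd * ρ1max + 2 * nv) ≤ 1 := by
    have h1 : γ 0 * nvd * ρ1max ≤ γ 0 * nvd * nρ :=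
      mul_le_mul_of_nonneg_left hnρ1 (mul_nonneg hγ00 hnvd0)
    have p1 : lam * (γ 0 * nvd * ρ1max) ≤ lam * (γ 0 * nvd * nρ) :=
      mul_le_mul_of_nonneg_left h1 hlam.le
    linarith only [p1, hlamD]
  have h2nv : lam * (2 * nv) ≤ 1 := by
    have h1 : 0 ≤ lam * (γ 0 * nvd * nρ) := mul_nonneg hlam.le
      (mul_nonneg (mul_nonneg hγ00 hnvd0) (le_trans hρ1max.le hnρ1))
    linarith only [h1, hlamD]
  -- induction on n
  intro n
  induction n with
  | zero => exact ⟨hinit1, hinit2, hinit3⟩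
  | succ n ih =>
    obtain ⟨ih1, ih2, ih3⟩ := ih
    -- roads 2 and 3
    have road2 : ∀ j : ℤ, 0 ≤ j → ρ2 (n+1) j ∈ Set.Icc 0 ρ2max := by
      intro j hj
      rw [hup2 n j hj]
      exact stmt4_out_step (Nη:ℤ) hN1 γ hγnn hγmono hγsum ρ2max nv nvd hρ2max hnv0 hnvd0
        v2 hv2nn hVnv2 hlip2 lam hlam hK2 (ρ2 n) ih2 (V2 n) (hV2 n) (F2 n) (hF2 n)
        (hF2in n).1 (hF2in n).2 j hj
    have road3 : ∀ j : ℤ, 0 ≤ j → ρ3 (n+1) j ∈ Set.Icc 0 ρ3max := by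
      intro j hj
      rw [hup3 n j hj]
      exact stmt4_out_step (Nη:ℤ) hN1 γ hγnn hγmono hγsum ρ3max nv nvd hρ3max hnv0 hnvd0
        v3 hv3nn hVnv3 hlip3 lam hlam hK3 (ρ3 n) ih3 (V3 n) (hV3 n) (F3 n) (hF3 n)
        (hF3in n).1 (hF3in n).2 j hj
    refine ⟨?_, road2, road3⟩
    -- road 1
    -- V2 / V3 bounds at every index
    have hV2b : ∀ i : ℤ, 0 ≤ V2 n i ∧ V2 n i ≤ nv := by
      intro i
      rw [hV2 n i]
      apply stmt4_V_bounds (Nη:ℤ) γ hγnn hγsum nv hnv0 _ _ (le_max_right _ _) le_rfl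
      intro k hk
      simp only [Finset.mem_Icc, max_le_iff, le_max_iff] at hk
      have hik : 0 ≤ i + k + 1 := by omega
      exact ⟨hv2nn _ (ih2 _ hik), hVnv2 _ (ih2 _ hik)⟩
    have hV3b : ∀ i : ℤ, 0 ≤ V3 n i ∧ V3 n i ≤ nv := by
      intro i
      rw [hV3 n i]
      apply stmt4_V_bounds (Nη:ℤ) γ hγnn hγsum nv hnv0 _ _ (le_max_right _ _) le_rfl
      intro k hk
      simp only [Finset.mem_Icc, max_le_iff, le_max_iff] at hk
      have hik : 0 ≤ i + k + 1 := by omega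
      exact ⟨hv3nn _ (ih3 _ hik), hVnv3 _ (ih3 _ hik)⟩
    -- V1 bounds on the incoming road
    have hV1b : ∀ i : ℤ, i ≤ -1 → 0 ≤ V1 n i ∧ V1 n i ≤ nv := by
      intro i hi
      rw [hV1 n i hi]
      apply stmt4_V_bounds (Nη:ℤ) γ hγnn hγsum nv hnv0 _ _ le_rfl (min_le_right _ _)
      intro k hk
      simp only [Finset.mem_Icc, le_min_iff] at hk
      have hik : i + k + 1 ≤ -1 := by omega
      exact ⟨hv1nn _ (ih1 _ hik), hVnv1 _ (ih1 _ hik)⟩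
    intro j hj
    rw [hup1 n j hj, hF1 n j hj, hF1 n (j-1) (by omega)]
    have haj := ih1 j hj
    have hbj := ih1 (j-1) (by omega)
    -- monotonicity of V2, V3 across the shift
    have hV2m : V2 n (j-1) ≤ V2 n j := by
      rw [hV2 n (j-1), hV2 n j]
      have hma : max (-(j-1)-1) 0 = -j := by omega
      have hmb : max (-j-1) 0 = -j-1 := by omega
      rw [hma, hmb]
      have key := stmt4_mono (Nη:ℤ) γ hγnn hγmono (-j) (by omega)
        (fun k => v2 (ρ2 n (j+k)))
        (fun k hk0 hk1 => hv2nn _ (ih2 _ (by omega)))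
      have e1 : ∀ k ∈ Finset.Icc (-j) ((Nη:ℤ)-1),
          γ k * v2 (ρ2 n (j-1+k+1)) = γ k * v2 (ρ2 n (j+k)) :=
        fun k _ => by rw [show j-1+k+1 = j+k by ring]
      have e2 : ∀ k ∈ Finset.Icc (-j-1) ((Nη:ℤ)-1),
          γ k * v2 (ρ2 n (j+k+1)) = γ k * v2 (ρ2 n (j+(k+1))) :=
        fun k _ => by rw [show j+(k+1) = j+k+1 by ring]
      rw [Finset.sum_congr rfl e1, Finset.sum_congr rfl e2]
      exact key
    have hV3m : V3 n (j-1) ≤ V3 n j := by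
      rw [hV3 n (j-1), hV3 n j]
      have hma : max (-(j-1)-1) 0 = -j := by omega
      have hmb : max (-j-1) 0 = -j-1 := by omega
      rw [hma, hmb]
      have key := stmt4_mono (Nη:ℤ) γ hγnn hγmono (-j) (by omega)
        (fun k => v3 (ρ3 n (j+k)))
        (fun k hk0 hk1 => hv3nn _ (ih3 _ (by omega)))
      have e1 : ∀ k ∈ Finset.Icc (-j) ((Nη:ℤ)-1),
          γ k * v3 (ρ3 n (j-1+k+1)) = γ k * v3 (ρ3 n (j+k)) :=
        fun k _ => by rw [show j-1+k+1 = j+k by ring]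
      have e2 : ∀ k ∈ Finset.Icc (-j-1) ((Nη:ℤ)-1),
          γ k * v3 (ρ3 n (j+k+1)) = γ k * v3 (ρ3 n (j+(k+1))) :=
        fun k _ => by rw [show j+(k+1) = j+k+1 by ring]
      rw [Finset.sum_congr rfl e1, Finset.sum_congr rfl e2]
      exact key
    -- shift estimate for V1
    have hV1shift : V1 n (j-1) ≤ γ 0 * v1 (ρ1 n j) + V1 n j := by
      rw [hV1 n (j-1) (by omega), hV1 n j hj]
      have key := stmt4_shift (Nη:ℤ) γ hγnn hγmono
        (min (-j-1) ((Nη:ℤ)-1)) (min (-j-2) ((Nη:ℤ)-1))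
        (by omega) (by omega) (by omega) (by omega)
        (fun k => v1 (ρ1 n (j+k)))
        (fun k hk0 hk1 => hv1nn _ (ih1 _ (by omega)))
      rw [show -(j-1)-2 = -j-1 by ring]
      have e1 : ∀ k ∈ Finset.Icc (0:ℤ) (min (-j-1) ((Nη:ℤ)-1)),
          γ k * v1 (ρ1 n (j-1+k+1)) = γ k * v1 (ρ1 n (j+k)) :=
        fun k _ => by rw [show j-1+k+1 = j+k by ring]
      have e2 : ∀ k ∈ Finset.Icc (0:ℤ) (min (-j-2) ((Nη:ℤ)-1)),
          γ k * v1 (ρ1 n (j+k+1)) = γ k * v1 (ρ1 n (j+(k+1))) :=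
        fun k _ => by rw [show j+(k+1) = j+k+1 by ring]
      rw [Finset.sum_congr rfl e1, Finset.sum_congr rfl e2]
      simpa using key
    -- abbreviations
    have hW1j := hV1b j hj
    have hW1j1 := hV1b (j-1) (by omega)
    have hW2j := hV2b j
    have hW3j := hV3b j
    have hW2j1 := hV2b (j-1)
    have hW3j1 := hV3b (j-1)
    have hgj := hg_bounds (ρ1 n j) haj (V2 n j) (V3 n j) hW2j.1 hW3j.1
    have hgj1nn : 0 ≤ g (ρ1 n (j-1)) (V2 n (j-1)) (V3 n (j-1)) :=
      (hg_bounds _ hbj _ _ hW2j1.1 hW3j1.1).1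
    -- g chain
    have hgchain : g (ρ1 n (j-1)) (V2 n (j-1)) (V3 n (j-1)) ≤ g ρ1max (V2 n j) (V3 n j) := by
      calc g (ρ1 n (j-1)) (V2 n (j-1)) (V3 n (j-1))
          ≤ g (ρ1 n (j-1)) (V2 n j) (V3 n (j-1)) :=
            hg_monoV2 _ hbj _ _ _ hW2j1.1 hV2m hW3j1.1
        _ ≤ g (ρ1 n (j-1)) (V2 n j) (V3 n j) :=
            hg_monoV3 _ hbj _ _ _ hW2j.1 hW3j1.1 hV3m
        _ ≤ g ρ1max (V2 n j) (V3 n j) := hg_max _ hbj _ _ hW2j.1 hW3j.1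
    -- Lipschitz estimate
    have hglip : g ρ1max (V2 n j) (V3 n j) - g (ρ1 n j) (V2 n j) (V3 n j)
        ≤ nv * (ρ1max - ρ1 n j) := by
      have h1 := hg_lip ρ1max ⟨hρ1max.le, le_rfl⟩ (ρ1 n j) haj (V2 n j) (V3 n j)
        hW2j.1 hW3j.1
      have h2 : |ρ1max - ρ1 n j| = ρ1max - ρ1 n j := abs_of_nonneg (by linarith [haj.2])
      rw [h2] at h1
      have h3 := le_trans (le_abs_self _) h1
      have h4 : L * (ρ1max - ρ1 n j) ≤ nv * (ρ1max - ρ1 n j) :=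
        mul_le_mul_of_nonneg_right hL (by linarith [haj.2])
      linarith
    have hv1aj := hv1nn _ haj
    have hv1lipj := hlip1 _ haj
    constructor
    · -- lower bound
      have e1 : α2 * V2 n j ≤ α2 * nv := mul_le_mul_of_nonneg_left hW2j.2 hα2
      have e2 : α3 * V3 n j ≤ α3 * nv := mul_le_mul_of_nonneg_left hW3j.2 hα3
      have e3 : α2 * nv + α3 * nv = nv := by rw [← add_mul, hα, one_mul]
      have e4 : V1 n j + (α2 * V2 n j + α3 * V3 n j) ≤ 2 * nv := by linarith [hW1j.2]
      have e5 : ρ1 n j * (V1 n j + (α2 * V2 n j + α3 * V3 n j)) ≤ ρ1 n j * (2 * nv) :=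
        mul_le_mul_of_nonneg_left e4 haj.1
      have e6 : lam * (ρ1 n j * (V1 n j + (α2 * V2 n j + α3 * V3 n j)))
          ≤ lam * (ρ1 n j * (2 * nv)) := mul_le_mul_of_nonneg_left e5 hlam.le
      have e7 : ρ1 n j * (lam * (2 * nv)) ≤ ρ1 n j * 1 :=
        mul_le_mul_of_nonneg_left h2nv haj.1
      have e8 : lam * g (ρ1 n j) (V2 n j) (V3 n j)
          ≤ lam * (ρ1 n j * (α2 * V2 n j + α3 * V3 n j)) :=
        mul_le_mul_of_nonneg_left hgj.2 hlam.le
      have e9 : 0 ≤ lam * (ρ1 n (j-1) * V1 n (j-1)) :=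
        mul_nonneg hlam.le (mul_nonneg hbj.1 hW1j1.1)
      have e10 : 0 ≤ lam * g (ρ1 n (j-1)) (V2 n (j-1)) (V3 n (j-1)) :=
        mul_nonneg hlam.le hgj1nn
      linarith only [e6, e7, e8, e9, e10, haj.1]
    · -- upper bound
      have u1 : ρ1 n (j-1) * V1 n (j-1) ≤ ρ1max * V1 n (j-1) :=
        mul_le_mul_of_nonneg_right hbj.2 hW1j1.1
      have u2 : ρ1max * V1 n (j-1) ≤ ρ1max * (γ 0 * v1 (ρ1 n j) + V1 n j) :=
        mul_le_mul_of_nonneg_left hV1shift hρ1max.le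
      have u3 : ρ1max * (γ 0 * v1 (ρ1 n j)) ≤ ρ1max * (γ 0 * (nvd * (ρ1max - ρ1 n j))) :=
        mul_le_mul_of_nonneg_left (mul_le_mul_of_nonneg_left hv1lipj hγ00) hρ1max.le
      have u4 : (ρ1max - ρ1 n j) * V1 n j ≤ (ρ1max - ρ1 n j) * nv :=
        mul_le_mul_of_nonneg_left hW1j.2 (by linarith [haj.2])
      have key : (ρ1 n (j-1) * V1 n (j-1) + g (ρ1 n (j-1)) (V2 n (j-1)) (V3 n (j-1)))
          - (ρ1 n j * V1 n j + g (ρ1 n j) (V2 n j) (V3 n j))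
          ≤ (γ 0 * nvd * ρ1max + 2 * nv) * (ρ1max - ρ1 n j) := by
        linarith only [u1, u2, u3, u4, hgchain, hglip]
      have fin1 : lam * ((ρ1 n (j-1) * V1 n (j-1) + g (ρ1 n (j-1)) (V2 n (j-1)) (V3 n (j-1)))
          - (ρ1 n j * V1 n j + g (ρ1 n j) (V2 n j) (V3 n j)))
          ≤ lam * ((γ 0 * nvd * ρ1max + 2 * nv) * (ρ1max - ρ1 n j)) :=
        mul_le_mul_of_nonneg_left key hlam.le
      have fin2 : (lam * (γ 0 * nvd * ρ1max + 2 * nv)) * (ρ1max - ρ1 n j)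
          ≤ 1 * (ρ1max - ρ1 n j) :=
        mul_le_mul_of_nonneg_right hK1 (by linarith [haj.2])
      linarith only [fin1, fin2]
end

section
/- Maximum principle under the relaxed CFL condition: for the 1-to-2 junction scheme with the maximum-flux coupling g(ρ,V₂,V₃) = min(α₂ ρ, ρ₂_max) V₂ + min(α₃ ρ, ρ₃_max) V₃, if the initial data satisfy 0 ≤ ρ⁰_{1,j} ≤ ρ₁_max for all j ≤ −1 and 0 ≤ ρ⁰_{e,j} ≤ ρ_e_max for all j ≥ 0, e ∈ {2,3}, and λ ≤ 1/(γ₀ ‖v'‖ ‖ρ‖ + ‖v‖), then for every n ∈ ℕ one has 0 ≤ ρⁿ_{1,j} ≤ ρ₁_max for all j ≤ −1 and 0 ≤ ρⁿ_{e,j} ≤ ρ_e_max for all j ≥ 0, e ∈ {2,3}. -/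
open MeasureTheory

lemma aux_le_sSup {f : ℝ → ℝ} {a b x : ℝ} (hf : ContinuousOn f (Set.Icc a b))
    (hx : x ∈ Set.Icc a b) : f x ≤ sSup (f '' Set.Icc a b) :=
  le_csSup (isCompact_Icc.bddAbove_image hf) ⟨x, hx, rfl⟩

lemma aux_bdd {v : ℝ → ℝ} {M : ℝ} (hM : 0 < M) (hv : ContDiffOn ℝ 2 v (Set.Icc 0 M)) :
    BddAbove ((fun x => |deriv v x|) '' Set.Icc 0 M) := by
  have hcont : ContinuousOn (fun x => |derivWithin v (Set.Icc 0 M) x|) (Set.Icc 0 M) :=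
    (hv.continuousOn_derivWithin (uniqueDiffOn_Icc hM) (by norm_num)).abs
  have h1 : BddAbove ((fun x => |derivWithin v (Set.Icc 0 M) x|) '' Set.Icc 0 M) :=
    isCompact_Icc.bddAbove_image hcont
  have hsub : (fun x => |deriv v x|) '' Set.Icc 0 M ⊆
      ((fun x => |derivWithin v (Set.Icc 0 M) x|) '' Set.Icc 0 M) ∪ {|deriv v 0|, |deriv v M|} := by
    rintro y ⟨x, hx, rfl⟩
    rcases eq_or_lt_of_le hx.1 with h0 | h0
    · right; left; rw [← h0]
    rcases eq_or_lt_of_le hx.2 with hM' | hM'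
    · right; right; rw [hM']; rfl
    · left
      refine ⟨x, hx, ?_⟩
      simp only []
      rw [derivWithin_of_mem_nhds (Icc_mem_nhds h0 hM')]
  exact (h1.union ((bddAbove_singleton).insert _)).mono hsub

lemma aux_lip {v : ℝ → ℝ} {M : ℝ} (hM : 0 < M) (hv : ContDiffOn ℝ 2 v (Set.Icc 0 M))
    (hvM : v M = 0) {x : ℝ} (hx : x ∈ Set.Icc 0 M) :
    v x ≤ sSup ((fun y => |deriv v y|) '' Set.Icc 0 M) * (M - x) := by
  rcases eq_or_lt_of_le hx.2 with h | h
  · rw [h, hvM, sub_self, mul_zero]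
  · have hsub : Set.Icc x M ⊆ Set.Icc 0 M := Set.Icc_subset_Icc hx.1 le_rfl
    obtain ⟨c, hc, hslope⟩ := exists_deriv_eq_slope v h (hv.continuousOn.mono hsub)
      ((hv.differentiableOn (by norm_num)).mono
        ((Set.Ioo_subset_Icc_self).trans hsub))
    have hcmem : c ∈ Set.Icc (0:ℝ) M := hsub (Set.Ioo_subset_Icc_self hc)
    have hb : |deriv v c| ≤ sSup ((fun y => |deriv v y|) '' Set.Icc 0 M) :=
      le_csSup (aux_bdd hM hv) ⟨c, hcmem, rfl⟩
    have hxM : 0 < M - x := by linarith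
    have : v x = -(deriv v c) * (M - x) := by
      field_simp at hslope
      nlinarith [hslope]
    rw [this]
    have := neg_abs_le (deriv v c)
    nlinarith [abs_nonneg (deriv v c)]

lemma aux_shift (f : ℤ → ℝ) (a b : ℤ) :
    ∑ k ∈ Finset.Icc (a+1) (b+1), f k = ∑ k ∈ Finset.Icc a b, f (k+1) := by
  rw [show Finset.Icc (a+1) (b+1) = Finset.map (addLeftEmbedding 1) (Finset.Icc a b) by
    rw [Finset.map_add_left_Icc]; congr 1 <;> ring, Finset.sum_map]
  refine Finset.sum_congr rfl fun k _ => ?_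
  simp [addLeftEmbedding, add_comm]

lemma aux_split (f : ℤ → ℝ) {b : ℤ} (hb : 0 ≤ b) :
    ∑ k ∈ Finset.Icc (0:ℤ) b, f k = f 0 + ∑ k ∈ Finset.Icc (1:ℤ) b, f k := by
  rw [show Finset.Icc (0:ℤ) b = insert 0 (Finset.Icc 1 b) by
    ext k; simp [Finset.mem_Icc]; omega, Finset.sum_insert (by simp)]

lemma key_shift {γ w : ℤ → ℝ} {N b1 b2 : ℤ} (hb1 : 0 ≤ b1) (hb1N : b1 ≤ N - 1)
    (hb2 : b2 = b1 ∨ b2 = b1 - 1)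
    (hγnn : ∀ k, 0 ≤ k → k ≤ N - 1 → 0 ≤ γ k)
    (hγmono : ∀ k, 1 ≤ k → k ≤ N - 1 → γ k ≤ γ (k - 1))
    (hw : ∀ k, 0 ≤ k → k ≤ max b1 (b2+1) → 0 ≤ w k) :
    ∑ k ∈ Finset.Icc (0:ℤ) b1, γ k * w k ≤
      γ 0 * w 0 + ∑ k ∈ Finset.Icc (0:ℤ) b2, γ k * w (k+1) := by
  have hsplit : ∑ k ∈ Finset.Icc (0:ℤ) b1, γ k * w k
      = γ 0 * w 0 + ∑ k ∈ Finset.Icc (1:ℤ) b1, γ k * w k := aux_split _ hb1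
  have step1 : ∑ k ∈ Finset.Icc (1:ℤ) b1, γ k * w k
      ≤ ∑ k ∈ Finset.Icc (1:ℤ) b1, γ (k-1) * w k := by
    refine Finset.sum_le_sum fun k hk => ?_
    rw [Finset.mem_Icc] at hk
    exact mul_le_mul_of_nonneg_right (hγmono k hk.1 (le_trans hk.2 hb1N))
      (hw k (by omega) (by omega))
  have step2 : ∑ k ∈ Finset.Icc (1:ℤ) b1, γ (k-1) * w k
      = ∑ k ∈ Finset.Icc (0:ℤ) (b1-1), γ k * w (k+1) := by
    have hs := aux_shift (fun k => γ (k-1) * w k) 0 (b1-1)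
    simp only [zero_add, sub_add_cancel] at hs
    rw [hs]
    exact Finset.sum_congr rfl fun k _ => by norm_num
  have step3 : ∑ k ∈ Finset.Icc (0:ℤ) (b1-1), γ k * w (k+1)
      ≤ ∑ k ∈ Finset.Icc (0:ℤ) b2, γ k * w (k+1) := by
    rcases hb2 with h | h
    · subst h
      refine Finset.sum_le_sum_of_subset_of_nonneg
        (Finset.Icc_subset_Icc le_rfl (by omega)) fun k hk _ => ?_
      rw [Finset.mem_Icc] at hk
      exact mul_nonneg (hγnn k hk.1 (by omega)) (hw (k+1) (by omega) (by omega))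
    · subst h; exact le_rfl
  linarith

lemma key_shift2 {γ w : ℤ → ℝ} {N a : ℤ} (ha : 1 ≤ a)
    (hγnn : ∀ k, 0 ≤ k → k ≤ N - 1 → 0 ≤ γ k)
    (hγmono : ∀ k, 1 ≤ k → k ≤ N - 1 → γ k ≤ γ (k - 1))
    (hw : ∀ k, a ≤ k → k ≤ N → 0 ≤ w k) :
    ∑ k ∈ Finset.Icc a (N-1), γ k * w k ≤
      ∑ k ∈ Finset.Icc (a-1) (N-1), γ k * w (k+1) := by
  have step2 : ∑ k ∈ Finset.Icc (a-1) (N-1), γ k * w (k+1)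
      = ∑ k ∈ Finset.Icc a N, γ (k-1) * w k := by
    have hs := aux_shift (fun k => γ (k-1) * w k) (a-1) (N-1)
    simp only [sub_add_cancel] at hs
    rw [hs]
    exact Finset.sum_congr rfl fun k _ => by norm_num
  rw [step2]
  calc ∑ k ∈ Finset.Icc a (N-1), γ k * w k
      ≤ ∑ k ∈ Finset.Icc a (N-1), γ (k-1) * w k := by
        refine Finset.sum_le_sum fun k hk => ?_
        rw [Finset.mem_Icc] at hk
        exact mul_le_mul_of_nonneg_right (hγmono k (le_trans ha hk.1) hk.2)
          (hw k hk.1 (by omega))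
    _ ≤ ∑ k ∈ Finset.Icc a N, γ (k-1) * w k := by
        refine Finset.sum_le_sum_of_subset_of_nonneg
          (Finset.Icc_subset_Icc le_rfl (by omega)) fun k hk _ => ?_
        rw [Finset.mem_Icc] at hk
        exact mul_nonneg (hγnn (k-1) (by omega) (by omega)) (hw k hk.1 hk.2)

lemma int_icc_sum' (f : ℤ → ℝ) (n : ℕ) :
    ∑ k ∈ Finset.Icc (0:ℤ) ((n:ℤ)-1), f k = ∑ k ∈ Finset.range n, f (k:ℤ) := by
  refine Finset.sum_nbij' (fun k => k.toNat) (fun k => (k:ℤ)) ?_ ?_ ?_ ?_ ?_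
  · intro a ha; simp only [Finset.mem_Icc] at ha; simp only [Finset.mem_range]; omega
  · intro a ha; simp only [Finset.mem_range] at ha; simp only [Finset.mem_Icc]; omega
  · intro a ha; simp only [Finset.mem_Icc] at ha; omega
  · intro a _; simp only [Int.toNat_natCast]
  · intro a ha; simp only [Finset.mem_Icc] at ha; congr 1; omega

lemma gamma_facts {ω : ℝ → ℝ} {η Δx : ℝ} {Nη : ℕ} (hΔx : 0 < Δx) (hηN : η = (Nη:ℝ) * Δx)
    (hωcont : ContinuousOn ω (Set.Icc 0 η))
    (hωmono : AntitoneOn ω (Set.Icc 0 η))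
    (hωnn : ∀ x ∈ Set.Icc (0:ℝ) η, 0 ≤ ω x)
    (hωint : (∫ x in (0:ℝ)..η, ω x) = 1)
    (γ : ℤ → ℝ)
    (hγ : ∀ k : ℤ, 0 ≤ k → k ≤ (Nη:ℤ) - 1 →
      γ k = ∫ x in ((k:ℝ) * Δx)..(((k:ℝ) + 1) * Δx), ω x) :
    (∀ k : ℤ, 0 ≤ k → k ≤ (Nη:ℤ) - 1 → 0 ≤ γ k) ∧
    (∀ k : ℤ, 1 ≤ k → k ≤ (Nη:ℤ) - 1 → γ k ≤ γ (k-1)) ∧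
    (∑ k ∈ Finset.Icc (0:ℤ) ((Nη:ℤ)-1), γ k = 1) := by
  have hIcc : ∀ a b : ℝ, 0 ≤ a → b ≤ η → Set.Icc a b ⊆ Set.Icc 0 η :=
    fun a b ha hb => Set.Icc_subset_Icc ha hb
  have hInt : ∀ a b : ℝ, 0 ≤ a → b ≤ η → a ≤ b → IntervalIntegrable ω volume a b := by
    intro a b ha hb hab
    exact (hωcont.mono (by rw [Set.uIcc_of_le hab]; exact hIcc a b ha hb)).intervalIntegrable
  refine ⟨?_, ?_, ?_⟩
  · intro k hk0 hk1
    rw [hγ k hk0 hk1]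
    have hk0' : (0:ℝ) ≤ (k:ℝ) := by exact_mod_cast hk0
    have hk1' : (k:ℝ) + 1 ≤ (Nη:ℝ) := by
      have : k + 1 ≤ (Nη:ℤ) := by omega
      exact_mod_cast this
    refine intervalIntegral.integral_nonneg (by nlinarith) fun u hu => ?_
    refine hωnn u (hIcc _ _ (by positivity) (by rw [hηN]; nlinarith) hu)
  · intro k hk1 hkN
    have hk1' : (1:ℝ) ≤ (k:ℝ) := by exact_mod_cast hk1
    have hkN' : (k:ℝ) + 1 ≤ (Nη:ℝ) := by
      have : k + 1 ≤ (Nη:ℤ) := by omega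
      exact_mod_cast this
    have e1 : γ (k-1) = ∫ x in (((k:ℝ)-1) * Δx)..((k:ℝ) * Δx), ω x := by
      rw [hγ (k-1) (by omega) (by omega)]
      push_cast
      congr 1 <;> ring
    have e2 : γ k = ∫ x in (((k:ℝ)-1) * Δx)..((k:ℝ) * Δx), ω (x + Δx) := by
      rw [intervalIntegral.integral_comp_add_right ω Δx, hγ k (by omega) hkN]
      congr 1 <;> ring
    rw [e1, e2]
    have hab : ((k:ℝ)-1) * Δx ≤ (k:ℝ) * Δx := by nlinarith
    have hbd : (k:ℝ) * Δx + Δx ≤ η := by rw [hηN]; nlinarith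
    have h0a : (0:ℝ) ≤ ((k:ℝ)-1) * Δx := by nlinarith
    refine intervalIntegral.integral_mono_on hab ?_ ?_ ?_
    · refine ContinuousOn.intervalIntegrable ?_
      rw [Set.uIcc_of_le hab]
      refine hωcont.comp ((continuous_id.add continuous_const).continuousOn) ?_
      intro x hx
      constructor
      · simp only [id]; linarith [hx.1]
      · simp only [id]; linarith [hx.2]
    · exact hInt _ _ h0a (by nlinarith) hab
    · intro x hx
      refine hωmono ?_ ?_ (by linarith)
      · exact ⟨by linarith [hx.1], by nlinarith [hx.2]⟩
      · exact ⟨by linarith [hx.1], by linarith [hx.2]⟩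
  · rw [int_icc_sum' γ Nη]
    have ha : ∀ k : ℕ, k < Nη →
        γ (k:ℤ) = ∫ x in ((k:ℝ) * Δx)..(((k:ℝ) + 1) * Δx), ω x := by
      intro k hk
      rw [hγ (k:ℤ) (by omega) (by omega)]
      norm_num
    rw [Finset.sum_congr rfl fun k hk => ha k (Finset.mem_range.mp hk)]
    have key := intervalIntegral.sum_integral_adjacent_intervals
      (f := ω) (μ := volume) (a := fun k : ℕ => (k:ℝ) * Δx) (n := Nη) ?_
    · have : ∀ k : ℕ, k ∈ Finset.range Nη →
          (∫ x in ((k:ℝ) * Δx)..(((k:ℝ) + 1) * Δx), ω x)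
          = ∫ x in ((k:ℝ) * Δx)..((((k+1):ℕ):ℝ) * Δx), ω x := by
        intro k _; congr 1; push_cast; ring
      rw [Finset.sum_congr rfl this, key]
      simp only [Nat.cast_zero, zero_mul]
      rw [← hηN, hωint]
    · intro k hk
      refine hInt _ _ (by positivity) ?_ ?_
      · rw [hηN]
        have : ((k:ℝ) + 1) ≤ (Nη:ℝ) := by exact_mod_cast hk
        push_cast; nlinarith
      · push_cast; nlinarith [Nat.cast_nonneg (α := ℝ) k]

lemma outgoing_step {ρmax nv nvd nρ lam γ0 r c A B vr : ℝ}
    (hr : 0 ≤ r) (hrM : r ≤ ρmax) (hc : 0 ≤ c) (hcM : c ≤ ρmax)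
    (hA : 0 ≤ A) (hAnv : A ≤ nv) (hB : 0 ≤ B) (hBnv : B ≤ nv)
    (hvr : 0 ≤ vr) (hvrlip : vr ≤ nvd * (ρmax - r))
    (hAB : A - B ≤ γ0 * vr)
    (hγ0 : 0 ≤ γ0) (hnvd : 0 ≤ nvd) (hnρ : 0 ≤ nρ) (hMρ : ρmax ≤ nρ)
    (hlam : 0 ≤ lam) (hCFL : lam * (γ0 * nvd * nρ + nv) ≤ 1) :
    r - lam * (r * B - c * A) ∈ Set.Icc 0 ρmax := by
  have hDnn : (0:ℝ) ≤ lam * (γ0 * nvd * nρ) :=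
    mul_nonneg hlam (mul_nonneg (mul_nonneg hγ0 hnvd) hnρ)
  constructor
  · have h1 : lam * B ≤ 1 := by
      nlinarith [mul_le_mul_of_nonneg_left hBnv hlam]
    nlinarith [mul_nonneg (mul_nonneg hlam hc) hA, mul_nonneg hr (sub_nonneg.2 h1)]
  · have key : (ρmax - r) * (1 - lam * A - lam * (γ0 * nvd * nρ)) ≥ 0 := by
      refine mul_nonneg (by linarith) ?_
      nlinarith [mul_le_mul_of_nonneg_left hAnv hlam]
    have h2 : r * vr ≤ nρ * (nvd * (ρmax - r)) :=
      mul_le_mul (le_trans hrM hMρ) hvrlip hvr hnρ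
    have h3 : lam * (γ0 * (r * vr)) ≤ lam * (γ0 * (nρ * (nvd * (ρmax - r)))) :=
      mul_le_mul_of_nonneg_left (mul_le_mul_of_nonneg_left h2 hγ0) hlam
    nlinarith [key, h3, mul_nonneg (mul_nonneg hlam hA) (sub_nonneg.2 hcM),
      mul_nonneg (mul_nonneg hlam hr) (by linarith [hAB] : (0:ℝ) ≤ B - A + γ0 * vr)]

lemma incoming_step {ρ1max nv nvd nρ lam γ0 r Fj Fjm Wj : ℝ}
    (hr : 0 ≤ r) (hrM : r ≤ ρ1max)
    (hFjm : 0 ≤ Fjm) (hFjW : Fj ≤ r * Wj) (hWj : 0 ≤ Wj) (hWnv : Wj ≤ nv)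
    (hlow : -((ρ1max - r) * (γ0 * nvd * nρ + nv)) ≤ Fj - Fjm)
    (hDnn : 0 ≤ γ0 * nvd * nρ) (hlam : 0 ≤ lam)
    (hCFL : lam * (γ0 * nvd * nρ + nv) ≤ 1) :
    r - lam * (Fj - Fjm) ∈ Set.Icc 0 ρ1max := by
  constructor
  · have h1 : lam * Wj ≤ 1 := by
      nlinarith [mul_le_mul_of_nonneg_left hWnv hlam, mul_nonneg hlam hDnn]
    nlinarith [mul_nonneg hlam hFjm, mul_le_mul_of_nonneg_left hFjW hlam,
      mul_nonneg hr (sub_nonneg.2 h1)]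
  · nlinarith [mul_nonneg (sub_nonneg.2 hrM) (sub_nonneg.2 hCFL),
      mul_le_mul_of_nonneg_left hlow hlam]

lemma aux_min_lip {a b c : ℝ} (hab : a ≤ b) : min b c - min a c ≤ b - a := by
  rcases le_total b c with h | h
  · rw [min_eq_left h, min_eq_left (le_trans hab h)]
  · rcases le_total a c with h' | h'
    · rw [min_eq_right h, min_eq_left h']; linarith
    · rw [min_eq_right h, min_eq_right h']; linarith

set_option maxHeartbeats 2000000 in
/-- Maximum principle under the relaxed CFL condition
`λ ≤ 1/(γ₀ ‖v'‖ ‖ρ‖ + ‖v‖)` for the 1-to-2 junction scheme with the maximum-flux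
coupling `g(ρ,V₂,V₃) = min(α₂ρ, ρ₂max) V₂ + min(α₃ρ, ρ₃max) V₃`. -/
theorem stmt_5
    (ρ1max ρ2max ρ3max : ℝ)
    (hρ1max : 0 < ρ1max) (hρ2max : 0 < ρ2max) (hρ3max : 0 < ρ3max)
    (v1 v2 v3 : ℝ → ℝ)
    (hv1 : ContDiffOn ℝ 2 v1 (Set.Icc 0 ρ1max))
    (hv1mono : AntitoneOn v1 (Set.Icc 0 ρ1max))
    (hv1nn : ∀ x ∈ Set.Icc (0 : ℝ) ρ1max, 0 ≤ v1 x)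
    (hv1max : v1 ρ1max = 0)
    (hv2 : ContDiffOn ℝ 2 v2 (Set.Icc 0 ρ2max))
    (hv2mono : AntitoneOn v2 (Set.Icc 0 ρ2max))
    (hv2nn : ∀ x ∈ Set.Icc (0 : ℝ) ρ2max, 0 ≤ v2 x)
    (hv2max : v2 ρ2max = 0)
    (hv3 : ContDiffOn ℝ 2 v3 (Set.Icc 0 ρ3max))
    (hv3mono : AntitoneOn v3 (Set.Icc 0 ρ3max))
    (hv3nn : ∀ x ∈ Set.Icc (0 : ℝ) ρ3max, 0 ≤ v3 x)
    (hv3max : v3 ρ3max = 0)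
    (η Δx : ℝ) (hη : 0 < η) (hΔx : 0 < Δx)
    (Nη : ℕ) (hNη : 0 < Nη) (hηN : η = (Nη : ℝ) * Δx)
    (ω : ℝ → ℝ)
    (hω : ContDiffOn ℝ 1 ω (Set.Icc 0 η))
    (hωmono : AntitoneOn ω (Set.Icc 0 η))
    (hωnn : ∀ x ∈ Set.Icc (0 : ℝ) η, 0 ≤ ω x)
    (hωint : (∫ x in (0 : ℝ)..η, ω x) = 1)
    (γ : ℤ → ℝ)
    (hγ : ∀ k : ℤ, 0 ≤ k → k ≤ (Nη : ℤ) - 1 →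
      γ k = ∫ x in ((k : ℝ) * Δx)..(((k : ℝ) + 1) * Δx), ω x)
    -- the norms ‖v‖, ‖v'‖, ‖ρ‖
    (nv nvd nρ : ℝ)
    (hnv : nv = max (sSup (v1 '' Set.Icc 0 ρ1max))
      (max (sSup (v2 '' Set.Icc 0 ρ2max)) (sSup (v3 '' Set.Icc 0 ρ3max))))
    (hnvd : nvd = max (sSup ((fun x => |deriv v1 x|) '' Set.Icc 0 ρ1max))
      (max (sSup ((fun x => |deriv v2 x|) '' Set.Icc 0 ρ2max))
        (sSup ((fun x => |deriv v3 x|) '' Set.Icc 0 ρ3max))))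
    (hnρ : nρ = max ρ1max (max ρ2max ρ3max))
    -- distribution parameters
    (α2 α3 : ℝ) (hα2 : 0 ≤ α2) (hα3 : 0 ≤ α3) (hα : α2 + α3 = 1)
    -- the maximum-flux coupling function g
    (g : ℝ → ℝ → ℝ → ℝ)
    (hg : ∀ r V2 V3 : ℝ,
      g r V2 V3 = min (α2 * r) ρ2max * V2 + min (α3 * r) ρ3max * V3)
    -- the scheme
    (lam : ℝ) (hlam : 0 < lam)
    (hCFL : lam ≤ 1 / (γ 0 * nvd * nρ + nv))
    (ρ1 ρ2 ρ3 : ℕ → ℤ → ℝ)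
    (V1 V2 V3 : ℕ → ℤ → ℝ)
    (hV1 : ∀ n : ℕ, ∀ j : ℤ, j ≤ -1 →
      V1 n j = ∑ k ∈ Finset.Icc (0 : ℤ) (min (-j - 2) ((Nη : ℤ) - 1)),
        γ k * v1 (ρ1 n (j + k + 1)))
    (hV2 : ∀ n : ℕ, ∀ j : ℤ,
      V2 n j = ∑ k ∈ Finset.Icc (max (-j - 1) 0) ((Nη : ℤ) - 1),
        γ k * v2 (ρ2 n (j + k + 1)))
    (hV3 : ∀ n : ℕ, ∀ j : ℤ,
      V3 n j = ∑ k ∈ Finset.Icc (max (-j - 1) 0) ((Nη : ℤ) - 1),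
        γ k * v3 (ρ3 n (j + k + 1)))
    (F1 F2 F3 : ℕ → ℤ → ℝ)
    (hF1 : ∀ n : ℕ, ∀ j : ℤ, j ≤ -1 →
      F1 n j = ρ1 n j * V1 n j + g (ρ1 n j) (V2 n j) (V3 n j))
    (hF2 : ∀ n : ℕ, ∀ j : ℤ, 0 ≤ j → F2 n j = ρ2 n j * V2 n j)
    (hF3 : ∀ n : ℕ, ∀ j : ℤ, 0 ≤ j → F3 n j = ρ3 n j * V3 n j)
    (hF2in : ∀ n : ℕ, F2 n (-1) = min (α2 * ρ1 n (-1)) ρ2max * V2 n (-1))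
    (hF3in : ∀ n : ℕ, F3 n (-1) = min (α3 * ρ1 n (-1)) ρ3max * V3 n (-1))
    (hup1 : ∀ n : ℕ, ∀ j : ℤ, j ≤ -1 →
      ρ1 (n + 1) j = ρ1 n j - lam * (F1 n j - F1 n (j - 1)))
    (hup2 : ∀ n : ℕ, ∀ j : ℤ, 0 ≤ j →
      ρ2 (n + 1) j = ρ2 n j - lam * (F2 n j - F2 n (j - 1)))
    (hup3 : ∀ n : ℕ, ∀ j : ℤ, 0 ≤ j →
      ρ3 (n + 1) j = ρ3 n j - lam * (F3 n j - F3 n (j - 1)))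
    -- initial data bounds
    (hinit1 : ∀ j : ℤ, j ≤ -1 → ρ1 0 j ∈ Set.Icc 0 ρ1max)
    (hinit2 : ∀ j : ℤ, 0 ≤ j → ρ2 0 j ∈ Set.Icc 0 ρ2max)
    (hinit3 : ∀ j : ℤ, 0 ≤ j → ρ3 0 j ∈ Set.Icc 0 ρ3max) :
    ∀ n : ℕ,
      (∀ j : ℤ, j ≤ -1 → ρ1 n j ∈ Set.Icc 0 ρ1max) ∧
      (∀ j : ℤ, 0 ≤ j → ρ2 n j ∈ Set.Icc 0 ρ2max) ∧
      (∀ j : ℤ, 0 ≤ j → ρ3 n j ∈ Set.Icc 0 ρ3max) := by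
  -- basic facts
  have hNηZ : (1:ℤ) ≤ (Nη:ℤ) := by exact_mod_cast hNη
  obtain ⟨hγnn, hγmono, hγsum⟩ :=
    gamma_facts hΔx hηN hω.continuousOn hωmono hωnn hωint γ hγ
  have hγpart : ∀ s : Finset ℤ, s ⊆ Finset.Icc (0:ℤ) ((Nη:ℤ)-1) → ∑ k ∈ s, γ k ≤ 1 := by
    intro s hs
    rw [← hγsum]
    refine Finset.sum_le_sum_of_subset_of_nonneg hs fun k hk _ => ?_
    rw [Finset.mem_Icc] at hk
    exact hγnn k hk.1 hk.2
  have hγ0nn : 0 ≤ γ 0 := hγnn 0 le_rfl (by omega)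
  -- norm facts
  have hnv1 : ∀ x ∈ Set.Icc (0:ℝ) ρ1max, v1 x ≤ nv := fun x hx =>
    (aux_le_sSup hv1.continuousOn hx).trans (by rw [hnv]; exact le_max_left _ _)
  have hnv2 : ∀ x ∈ Set.Icc (0:ℝ) ρ2max, v2 x ≤ nv := fun x hx =>
    (aux_le_sSup hv2.continuousOn hx).trans
      (by rw [hnv]; exact le_trans (le_max_left _ _) (le_max_right _ _))
  have hnv3 : ∀ x ∈ Set.Icc (0:ℝ) ρ3max, v3 x ≤ nv := fun x hx =>
    (aux_le_sSup hv3.continuousOn hx).trans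
      (by rw [hnv]; exact le_trans (le_max_right _ _) (le_max_right _ _))
  have hnvnn : 0 ≤ nv := by
    have h := hnv1 ρ1max ⟨hρ1max.le, le_rfl⟩
    rw [hv1max] at h; exact h
  have hnvdnn : 0 ≤ nvd := by
    have h := le_csSup (aux_bdd hρ1max hv1) ⟨0, ⟨le_rfl, hρ1max.le⟩, rfl⟩
    rw [hnvd]
    exact le_trans (le_trans (abs_nonneg _) h) (le_max_left _ _)
  have hnρ1 : ρ1max ≤ nρ := by rw [hnρ]; exact le_max_left _ _
  have hnρ2 : ρ2max ≤ nρ := by rw [hnρ]; exact le_trans (le_max_left _ _) (le_max_right _ _)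
  have hnρ3 : ρ3max ≤ nρ := by rw [hnρ]; exact le_trans (le_max_right _ _) (le_max_right _ _)
  have hnρnn : 0 ≤ nρ := le_trans hρ1max.le hnρ1
  -- Lipschitz bounds
  have hlip1 : ∀ r ∈ Set.Icc (0:ℝ) ρ1max, v1 r ≤ nvd * (ρ1max - r) := by
    intro r hr
    refine (aux_lip hρ1max hv1 hv1max hr).trans
      (mul_le_mul_of_nonneg_right ?_ (by linarith [hr.2]))
    rw [hnvd]; exact le_max_left _ _
  have hlip2 : ∀ r ∈ Set.Icc (0:ℝ) ρ2max, v2 r ≤ nvd * (ρ2max - r) := by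
    intro r hr
    refine (aux_lip hρ2max hv2 hv2max hr).trans
      (mul_le_mul_of_nonneg_right ?_ (by linarith [hr.2]))
    rw [hnvd]; exact le_trans (le_max_left _ _) (le_max_right _ _)
  have hlip3 : ∀ r ∈ Set.Icc (0:ℝ) ρ3max, v3 r ≤ nvd * (ρ3max - r) := by
    intro r hr
    refine (aux_lip hρ3max hv3 hv3max hr).trans
      (mul_le_mul_of_nonneg_right ?_ (by linarith [hr.2]))
    rw [hnvd]; exact le_trans (le_max_right _ _) (le_max_right _ _)
  -- CFL facts
  have hDnn : 0 ≤ γ 0 * nvd * nρ := mul_nonneg (mul_nonneg hγ0nn hnvdnn) hnρnn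
  have hDpos : 0 < γ 0 * nvd * nρ + nv := by
    rcases lt_or_eq_of_le (add_nonneg hDnn hnvnn) with h | h
    · exact h
    · rw [← h] at hCFL; norm_num at hCFL; linarith
  have hlamCFL : lam * (γ 0 * nvd * nρ + nv) ≤ 1 := by
    rw [le_div_iff₀ hDpos] at hCFL
    linarith [hCFL]
  -- induction
  intro n
  induction n with
  | zero => exact ⟨hinit1, hinit2, hinit3⟩
  | succ n ih =>
    obtain ⟨ih1, ih2, ih3⟩ := ih
    -- velocity nonnegativity
    have hV1nn : ∀ j : ℤ, j ≤ -1 → 0 ≤ V1 n j := by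
      intro j hj
      rw [hV1 n j hj]
      refine Finset.sum_nonneg fun k hk => ?_
      rw [Finset.mem_Icc] at hk
      exact mul_nonneg (hγnn k hk.1 (by omega)) (hv1nn _ (ih1 (j+k+1) (by omega)))
    have hV2nn : ∀ j : ℤ, 0 ≤ V2 n j := by
      intro j
      rw [hV2 n j]
      refine Finset.sum_nonneg fun k hk => ?_
      rw [Finset.mem_Icc] at hk
      exact mul_nonneg (hγnn k (by omega) hk.2) (hv2nn _ (ih2 (j+k+1) (by omega)))
    have hV3nn : ∀ j : ℤ, 0 ≤ V3 n j := by
      intro j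
      rw [hV3 n j]
      refine Finset.sum_nonneg fun k hk => ?_
      rw [Finset.mem_Icc] at hk
      exact mul_nonneg (hγnn k (by omega) hk.2) (hv3nn _ (ih3 (j+k+1) (by omega)))
    -- velocity upper bounds on outgoing roads, j ≥ -1
    have hV2nv : ∀ j : ℤ, -1 ≤ j → V2 n j ≤ nv := by
      intro j hj
      rw [hV2 n j, show max (-j-1) 0 = 0 from by omega]
      calc ∑ k ∈ Finset.Icc (0:ℤ) ((Nη:ℤ)-1), γ k * v2 (ρ2 n (j+k+1))
          ≤ ∑ k ∈ Finset.Icc (0:ℤ) ((Nη:ℤ)-1), γ k * nv := by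
            refine Finset.sum_le_sum fun k hk => ?_
            rw [Finset.mem_Icc] at hk
            exact mul_le_mul_of_nonneg_left
              (hnv2 _ (ih2 (j+k+1) (by omega))) (hγnn k hk.1 hk.2)
        _ = (∑ k ∈ Finset.Icc (0:ℤ) ((Nη:ℤ)-1), γ k) * nv := (Finset.sum_mul _ _ _).symm
        _ ≤ 1 * nv := mul_le_mul_of_nonneg_right (hγpart _ (le_refl _)) hnvnn
        _ = nv := one_mul _
    have hV3nv : ∀ j : ℤ, -1 ≤ j → V3 n j ≤ nv := by
      intro j hj
      rw [hV3 n j, show max (-j-1) 0 = 0 from by omega]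
      calc ∑ k ∈ Finset.Icc (0:ℤ) ((Nη:ℤ)-1), γ k * v3 (ρ3 n (j+k+1))
          ≤ ∑ k ∈ Finset.Icc (0:ℤ) ((Nη:ℤ)-1), γ k * nv := by
            refine Finset.sum_le_sum fun k hk => ?_
            rw [Finset.mem_Icc] at hk
            exact mul_le_mul_of_nonneg_left
              (hnv3 _ (ih3 (j+k+1) (by omega))) (hγnn k hk.1 hk.2)
        _ = (∑ k ∈ Finset.Icc (0:ℤ) ((Nη:ℤ)-1), γ k) * nv := (Finset.sum_mul _ _ _).symm
        _ ≤ 1 * nv := mul_le_mul_of_nonneg_right (hγpart _ (le_refl _)) hnvnn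
        _ = nv := one_mul _
    -- combined velocity bound on the incoming road
    have hWnv : ∀ j : ℤ, j ≤ -1 → V1 n j + α2 * V2 n j + α3 * V3 n j ≤ nv := by
      intro j hj
      set S1 := ∑ k ∈ Finset.Icc (0:ℤ) (min (-j-2) ((Nη:ℤ)-1)), γ k with hS1def
      set S2 := ∑ k ∈ Finset.Icc (max (-j-1) 0) ((Nη:ℤ)-1), γ k with hS2def
      have h1 : V1 n j ≤ S1 * nv := by
        rw [hV1 n j hj, hS1def, Finset.sum_mul]
        refine Finset.sum_le_sum fun k hk => ?_
        rw [Finset.mem_Icc] at hk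
        exact mul_le_mul_of_nonneg_left
          (hnv1 _ (ih1 (j+k+1) (by omega))) (hγnn k hk.1 (by omega))
      have h2 : V2 n j ≤ S2 * nv := by
        rw [hV2 n j, hS2def, Finset.sum_mul]
        refine Finset.sum_le_sum fun k hk => ?_
        rw [Finset.mem_Icc] at hk
        exact mul_le_mul_of_nonneg_left
          (hnv2 _ (ih2 (j+k+1) (by omega))) (hγnn k (by omega) hk.2)
      have h3 : V3 n j ≤ S2 * nv := by
        rw [hV3 n j, hS2def, Finset.sum_mul]
        refine Finset.sum_le_sum fun k hk => ?_
        rw [Finset.mem_Icc] at hk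
        exact mul_le_mul_of_nonneg_left
          (hnv3 _ (ih3 (j+k+1) (by omega))) (hγnn k (by omega) hk.2)
      have hdisj : Disjoint (Finset.Icc (0:ℤ) (min (-j-2) ((Nη:ℤ)-1)))
          (Finset.Icc (max (-j-1) 0) ((Nη:ℤ)-1)) := by
        rw [Finset.disjoint_left]
        intro k hk1 hk2
        rw [Finset.mem_Icc] at hk1 hk2
        omega
      have hS : S1 + S2 ≤ 1 := by
        rw [hS1def, hS2def, ← Finset.sum_union hdisj]
        refine hγpart _ (Finset.union_subset ?_ ?_)
        · exact Finset.Icc_subset_Icc le_rfl (min_le_right _ _)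
        · exact Finset.Icc_subset_Icc (le_max_right _ _) le_rfl
      have hSnv : (S1 + S2) * nv ≤ 1 * nv := mul_le_mul_of_nonneg_right hS hnvnn
      have hcomb : α2 * (S2 * nv) + α3 * (S2 * nv) = S2 * nv := by
        rw [← add_mul, hα, one_mul]
      have h2' := mul_le_mul_of_nonneg_left h2 hα2
      have h3' := mul_le_mul_of_nonneg_left h3 hα3
      linarith only [h1, h2', h3', hSnv, hcomb]
    -- velocity comparisons on outgoing roads, j ≥ 0
    have hcomp2 : ∀ j : ℤ, 0 ≤ j → V2 n (j-1) - V2 n j ≤ γ 0 * v2 (ρ2 n j) := by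
      intro j hj
      have key := key_shift (γ := γ) (w := fun k => v2 (ρ2 n (j+k))) (N := (Nη:ℤ))
        (b1 := (Nη:ℤ)-1) (b2 := (Nη:ℤ)-1) (by omega) le_rfl (Or.inl rfl) hγnn hγmono
        (fun k hk0 hk1 => hv2nn _ (ih2 (j+k) (by omega)))
      simp only [add_zero] at key
      rw [hV2 n (j-1), hV2 n j, show max (-(j-1)-1) 0 = 0 from by omega,
        show max (-j-1) 0 = 0 from by omega]
      have e1 : ∑ k ∈ Finset.Icc (0:ℤ) ((Nη:ℤ)-1), γ k * v2 (ρ2 n (j-1+k+1))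
          = ∑ k ∈ Finset.Icc (0:ℤ) ((Nη:ℤ)-1), γ k * v2 (ρ2 n (j+k)) :=
        Finset.sum_congr rfl fun k _ => by rw [show j-1+k+1 = j+k from by ring]
      have e2 : ∑ k ∈ Finset.Icc (0:ℤ) ((Nη:ℤ)-1), γ k * v2 (ρ2 n (j+k+1))
          = ∑ k ∈ Finset.Icc (0:ℤ) ((Nη:ℤ)-1), γ k * v2 (ρ2 n (j+(k+1))) :=
        Finset.sum_congr rfl fun k _ => by rw [show j+k+1 = j+(k+1) from by ring]
      rw [e1, e2]
      linarith [key]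
    have hcomp3 : ∀ j : ℤ, 0 ≤ j → V3 n (j-1) - V3 n j ≤ γ 0 * v3 (ρ3 n j) := by
      intro j hj
      have key := key_shift (γ := γ) (w := fun k => v3 (ρ3 n (j+k))) (N := (Nη:ℤ))
        (b1 := (Nη:ℤ)-1) (b2 := (Nη:ℤ)-1) (by omega) le_rfl (Or.inl rfl) hγnn hγmono
        (fun k hk0 hk1 => hv3nn _ (ih3 (j+k) (by omega)))
      simp only [add_zero] at key
      rw [hV3 n (j-1), hV3 n j, show max (-(j-1)-1) 0 = 0 from by omega,
        show max (-j-1) 0 = 0 from by omega]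
      have e1 : ∑ k ∈ Finset.Icc (0:ℤ) ((Nη:ℤ)-1), γ k * v3 (ρ3 n (j-1+k+1))
          = ∑ k ∈ Finset.Icc (0:ℤ) ((Nη:ℤ)-1), γ k * v3 (ρ3 n (j+k)) :=
        Finset.sum_congr rfl fun k _ => by rw [show j-1+k+1 = j+k from by ring]
      have e2 : ∑ k ∈ Finset.Icc (0:ℤ) ((Nη:ℤ)-1), γ k * v3 (ρ3 n (j+k+1))
          = ∑ k ∈ Finset.Icc (0:ℤ) ((Nη:ℤ)-1), γ k * v3 (ρ3 n (j+(k+1))) :=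
        Finset.sum_congr rfl fun k _ => by rw [show j+k+1 = j+(k+1) from by ring]
      rw [e1, e2]
      linarith [key]
    -- monotonicity of outgoing velocities seen from the incoming road
    have hmono2 : ∀ j : ℤ, j ≤ -1 → V2 n (j-1) ≤ V2 n j := by
      intro j hj
      have key := key_shift2 (γ := γ) (w := fun k => v2 (ρ2 n (j+k))) (N := (Nη:ℤ))
        (a := -j) (by omega) hγnn hγmono
        (fun k hk0 hk1 => hv2nn _ (ih2 (j+k) (by omega)))
      rw [hV2 n (j-1), hV2 n j, show max (-(j-1)-1) 0 = -j from by omega,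
        show max (-j-1) 0 = -j-1 from by omega]
      have e1 : ∑ k ∈ Finset.Icc (-j) ((Nη:ℤ)-1), γ k * v2 (ρ2 n (j-1+k+1))
          = ∑ k ∈ Finset.Icc (-j) ((Nη:ℤ)-1), γ k * v2 (ρ2 n (j+k)) :=
        Finset.sum_congr rfl fun k _ => by rw [show j-1+k+1 = j+k from by ring]
      have e2 : ∑ k ∈ Finset.Icc (-j-1) ((Nη:ℤ)-1), γ k * v2 (ρ2 n (j+k+1))
          = ∑ k ∈ Finset.Icc (-j-1) ((Nη:ℤ)-1), γ k * v2 (ρ2 n (j+(k+1))) :=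
        Finset.sum_congr rfl fun k _ => by rw [show j+k+1 = j+(k+1) from by ring]
      rw [e1, e2]
      exact key
    have hmono3 : ∀ j : ℤ, j ≤ -1 → V3 n (j-1) ≤ V3 n j := by
      intro j hj
      have key := key_shift2 (γ := γ) (w := fun k => v3 (ρ3 n (j+k))) (N := (Nη:ℤ))
        (a := -j) (by omega) hγnn hγmono
        (fun k hk0 hk1 => hv3nn _ (ih3 (j+k) (by omega)))
      rw [hV3 n (j-1), hV3 n j, show max (-(j-1)-1) 0 = -j from by omega,
        show max (-j-1) 0 = -j-1 from by omega]
      have e1 : ∑ k ∈ Finset.Icc (-j) ((Nη:ℤ)-1), γ k * v3 (ρ3 n (j-1+k+1))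
          = ∑ k ∈ Finset.Icc (-j) ((Nη:ℤ)-1), γ k * v3 (ρ3 n (j+k)) :=
        Finset.sum_congr rfl fun k _ => by rw [show j-1+k+1 = j+k from by ring]
      have e2 : ∑ k ∈ Finset.Icc (-j-1) ((Nη:ℤ)-1), γ k * v3 (ρ3 n (j+k+1))
          = ∑ k ∈ Finset.Icc (-j-1) ((Nη:ℤ)-1), γ k * v3 (ρ3 n (j+(k+1))) :=
        Finset.sum_congr rfl fun k _ => by rw [show j+k+1 = j+(k+1) from by ring]
      rw [e1, e2]
      exact key
    -- incoming velocity comparison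
    have hcomp1 : ∀ j : ℤ, j ≤ -1 → V1 n (j-1) - V1 n j ≤ γ 0 * v1 (ρ1 n j) := by
      intro j hj
      have key := key_shift (γ := γ) (w := fun k => v1 (ρ1 n (j+k))) (N := (Nη:ℤ))
        (b1 := min (-j-1) ((Nη:ℤ)-1)) (b2 := min (-j-2) ((Nη:ℤ)-1))
        (by omega) (by omega) (by omega) hγnn hγmono
        (fun k hk0 hk1 => hv1nn _ (ih1 (j+k) (by omega)))
      simp only [add_zero] at key
      rw [hV1 n (j-1) (by omega), hV1 n j hj,
        show -(j-1)-2 = -j-1 from by ring]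
      have e1 : ∑ k ∈ Finset.Icc (0:ℤ) (min (-j-1) ((Nη:ℤ)-1)), γ k * v1 (ρ1 n (j-1+k+1))
          = ∑ k ∈ Finset.Icc (0:ℤ) (min (-j-1) ((Nη:ℤ)-1)), γ k * v1 (ρ1 n (j+k)) :=
        Finset.sum_congr rfl fun k _ => by rw [show j-1+k+1 = j+k from by ring]
      have e2 : ∑ k ∈ Finset.Icc (0:ℤ) (min (-j-2) ((Nη:ℤ)-1)), γ k * v1 (ρ1 n (j+k+1))
          = ∑ k ∈ Finset.Icc (0:ℤ) (min (-j-2) ((Nη:ℤ)-1)), γ k * v1 (ρ1 n (j+(k+1))) :=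
        Finset.sum_congr rfl fun k _ => by rw [show j+k+1 = j+(k+1) from by ring]
      rw [e1, e2]
      linarith [key]
    refine ⟨?_, ?_, ?_⟩
    · -- incoming road
      intro j hj
      have hr := ih1 j hj
      have hrm := ih1 (j-1) (by omega)
      have hm2nn : 0 ≤ min (α2 * ρ1 n j) ρ2max :=
        le_min (mul_nonneg hα2 hr.1) hρ2max.le
      have hm3nn : 0 ≤ min (α3 * ρ1 n j) ρ3max :=
        le_min (mul_nonneg hα3 hr.1) hρ3max.le
      have hf1 : F1 n j = ρ1 n j * V1 n j + min (α2 * ρ1 n j) ρ2max * V2 n j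
          + min (α3 * ρ1 n j) ρ3max * V3 n j := by
        rw [hF1 n j hj, hg]; ring
      have hf1m : F1 n (j-1) = ρ1 n (j-1) * V1 n (j-1)
          + min (α2 * ρ1 n (j-1)) ρ2max * V2 n (j-1)
          + min (α3 * ρ1 n (j-1)) ρ3max * V3 n (j-1) := by
        rw [hF1 n (j-1) (by omega), hg]; ring
      have hFjm_nn : 0 ≤ F1 n (j-1) := by
        rw [hf1m]
        have g1 := hV1nn (j-1) (by omega)
        have g2 := hV2nn (j-1)
        have g3 := hV3nn (j-1)
        have h2 : 0 ≤ min (α2 * ρ1 n (j-1)) ρ2max :=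
          le_min (mul_nonneg hα2 hrm.1) hρ2max.le
        have h3 : 0 ≤ min (α3 * ρ1 n (j-1)) ρ3max :=
          le_min (mul_nonneg hα3 hrm.1) hρ3max.le
        exact add_nonneg (add_nonneg (mul_nonneg hrm.1 g1) (mul_nonneg h2 g2))
          (mul_nonneg h3 g3)
      have hFj_le : F1 n j ≤ ρ1 n j * (V1 n j + α2 * V2 n j + α3 * V3 n j) := by
        rw [hf1]
        have h2 := mul_le_mul_of_nonneg_right
          (min_le_left (α2 * ρ1 n j) ρ2max) (hV2nn j)
        have h3 := mul_le_mul_of_nonneg_right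
          (min_le_left (α3 * ρ1 n j) ρ3max) (hV3nn j)
        linarith only [h2, h3]
      have hWnn : 0 ≤ V1 n j + α2 * V2 n j + α3 * V3 n j :=
        add_nonneg (add_nonneg (hV1nn j hj) (mul_nonneg hα2 (hV2nn j)))
          (mul_nonneg hα3 (hV3nn j))
      -- lower bound for the flux difference
      have hFjm_le : F1 n (j-1) ≤ ρ1max * V1 n (j-1)
          + min (α2 * ρ1max) ρ2max * V2 n (j-1)
          + min (α3 * ρ1max) ρ3max * V3 n (j-1) := by
        rw [hf1m]
        have t1 := mul_le_mul_of_nonneg_right hrm.2 (hV1nn (j-1) (by omega))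
        have t2 := mul_le_mul_of_nonneg_right
          (min_le_min (mul_le_mul_of_nonneg_left hrm.2 hα2) (le_refl ρ2max)) (hV2nn (j-1))
        have t3 := mul_le_mul_of_nonneg_right
          (min_le_min (mul_le_mul_of_nonneg_left hrm.2 hα3) (le_refl ρ3max)) (hV3nn (j-1))
        linarith
      have hminlip2 : min (α2 * ρ1max) ρ2max - min (α2 * ρ1 n j) ρ2max
          ≤ α2 * (ρ1max - ρ1 n j) :=
        le_of_le_of_eq (aux_min_lip (mul_le_mul_of_nonneg_left hr.2 hα2)) (by ring)
      have hminlip3 : min (α3 * ρ1max) ρ3max - min (α3 * ρ1 n j) ρ3max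
          ≤ α3 * (ρ1max - ρ1 n j) :=
        le_of_le_of_eq (aux_min_lip (mul_le_mul_of_nonneg_left hr.2 hα3)) (by ring)
      have f3 : min (α2 * ρ1 n j) ρ2max * V2 n (j-1) ≤ min (α2 * ρ1 n j) ρ2max * V2 n j :=
        mul_le_mul_of_nonneg_left (hmono2 j hj) hm2nn
      have f4 : min (α3 * ρ1 n j) ρ3max * V3 n (j-1) ≤ min (α3 * ρ1 n j) ρ3max * V3 n j :=
        mul_le_mul_of_nonneg_left (hmono3 j hj) hm3nn
      have f6 : ρ1 n j * V1 n (j-1) - ρ1 n j * V1 n j ≤ ρ1 n j * (γ 0 * v1 (ρ1 n j)) := by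
        have := mul_le_mul_of_nonneg_left (hcomp1 j hj) hr.1
        linarith only [this]
      have f7 : ρ1 n j * (γ 0 * v1 (ρ1 n j)) ≤ γ 0 * nvd * nρ * (ρ1max - ρ1 n j) := by
        have hv1r := hv1nn _ hr
        have hl := hlip1 _ hr
        have h1 : ρ1 n j * (γ 0 * v1 (ρ1 n j)) ≤ nρ * (γ 0 * v1 (ρ1 n j)) :=
          mul_le_mul_of_nonneg_right (le_trans hr.2 hnρ1)
            (mul_nonneg hγ0nn hv1r)
        have h2 : γ 0 * v1 (ρ1 n j) ≤ γ 0 * (nvd * (ρ1max - ρ1 n j)) :=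
          mul_le_mul_of_nonneg_left hl hγ0nn
        linarith only [h1, mul_le_mul_of_nonneg_left h2 hnρnn]
      have f8 : (ρ1max - ρ1 n j) * (V1 n (j-1) + α2 * V2 n (j-1) + α3 * V3 n (j-1))
          ≤ (ρ1max - ρ1 n j) * nv :=
        mul_le_mul_of_nonneg_left (hWnv (j-1) (by omega)) (by linarith [hr.2])
      have flip2 := mul_le_mul_of_nonneg_right hminlip2 (hV2nn (j-1))
      have flip3 := mul_le_mul_of_nonneg_right hminlip3 (hV3nn (j-1))
      have t1 : ρ1 n j * V1 n (j-1) - ρ1max * V1 n (j-1)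
          = -((ρ1max - ρ1 n j) * V1 n (j-1)) := by ring
      have hlow : -((ρ1max - ρ1 n j) * (γ 0 * nvd * nρ + nv)) ≤ F1 n j - F1 n (j-1) := by
        rw [hf1]
        linarith only [hFjm_le, f3, f4, f6, f7, f8, flip2, flip3]
      rw [hup1 n j hj]
      exact incoming_step hr.1 hr.2 hFjm_nn hFj_le hWnn (hWnv j hj) hlow hDnn hlam.le hlamCFL
    · -- outgoing road 2
      intro j hj
      obtain ⟨c, hFm, hc0, hcM⟩ : ∃ c, F2 n (j-1) = c * V2 n (j-1) ∧ 0 ≤ c ∧ c ≤ ρ2max := by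
        rcases eq_or_lt_of_le hj with h0 | h1
        · refine ⟨min (α2 * ρ1 n (-1)) ρ2max, ?_,
            le_min (mul_nonneg hα2 (ih1 (-1) (by norm_num)).1) hρ2max.le,
            min_le_right _ _⟩
          rw [show j - 1 = -1 from by omega]
          exact hF2in n
        · have hj1 : (0:ℤ) ≤ j - 1 := by omega
          exact ⟨ρ2 n (j-1), hF2 n (j-1) hj1, (ih2 (j-1) hj1).1, (ih2 (j-1) hj1).2⟩
      rw [hup2 n j hj, hF2 n j hj, hFm]
      exact outgoing_step (ih2 j hj).1 (ih2 j hj).2 hc0 hcM (hV2nn (j-1))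
        (hV2nv (j-1) (by omega)) (hV2nn j) (hV2nv j (by omega))
        (hv2nn _ (ih2 j hj)) (hlip2 _ (ih2 j hj)) (hcomp2 j hj)
        hγ0nn hnvdnn hnρnn hnρ2 hlam.le hlamCFL
    · -- outgoing road 3
      intro j hj
      obtain ⟨c, hFm, hc0, hcM⟩ : ∃ c, F3 n (j-1) = c * V3 n (j-1) ∧ 0 ≤ c ∧ c ≤ ρ3max := by
        rcases eq_or_lt_of_le hj with h0 | h1
        · refine ⟨min (α3 * ρ1 n (-1)) ρ3max, ?_,
            le_min (mul_nonneg hα3 (ih1 (-1) (by norm_num)).1) hρ3max.le,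
            min_le_right _ _⟩
          rw [show j - 1 = -1 from by omega]
          exact hF3in n
        · have hj1 : (0:ℤ) ≤ j - 1 := by omega
          exact ⟨ρ3 n (j-1), hF3 n (j-1) hj1, (ih3 (j-1) hj1).1, (ih3 (j-1) hj1).2⟩
      rw [hup3 n j hj, hF3 n j hj, hFm]
      exact outgoing_step (ih3 j hj).1 (ih3 j hj).2 hc0 hcM (hV3nn (j-1))
        (hV3nv (j-1) (by omega)) (hV3nn j) (hV3nv j (by omega))
        (hv3nn _ (ih3 j hj)) (hlip3 _ (ih3 j hj)) (hcomp3 j hj)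
        hγ0nn hnvdnn hnρnn hnρ3 hlam.le hlamCFL
end
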